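/- arXiv:2408.05611 — 3 statements merged into one kernel-verified Lean document; each statement's English description precedes it below -/
import Mathlib

section
/- Let G be a Cartesian product of finite graphs G_1, ..., G_k, each with at least one vertex. Then the expansion of G satisfies h(G) >= (1/2) * min_{1 <= i <= k} h(G_i). -/
open scoped BigOperators

/-- The number of edges of `G` with exactly one endpoint in `S`. -/
noncomputable def boundarySize {V : Type*} (G : SimpleGraph V) (S : Set V) : ℕ :=
  {e ∈ G.edgeSet | ∃ u ∈ e, u ∈ S ∧ ∃ v ∈ e, v ∉ S}.ncard

/-- The (edge) expansion of `G`: the minimum of `|∂S|/|S|` over nonempty vertex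
subsets `S` with `|S| ≤ |V|/2`. -/
noncomputable def expansion {V : Type*} (G : SimpleGraph V) : ℝ :=
  sInf {x : ℝ | ∃ S : Set V, S.Nonempty ∧ 2 * S.ncard ≤ Nat.card V ∧
    x = (boundarySize G S : ℝ) / (S.ncard : ℝ)}

/-- The Cartesian (box) product of a family of graphs: two tuples are adjacent iff they differ
in exactly one coordinate and the differing coordinates are adjacent in the corresponding
factor. -/
def boxProdMany {k : ℕ} {V : Fin k → Type*} (G : ∀ i, SimpleGraph (V i)) :
    SimpleGraph (∀ i, V i) where
  Adj x y := ∃ i, (G i).Adj (x i) (y i) ∧ ∀ j, j ≠ i → x j = y j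
  symm := by
    constructor
    rintro x y ⟨i, h, hj⟩
    exact ⟨i, (G i).adj_symm h, fun j hji => (hj j hji).symm⟩
  loopless := ⟨fun x ⟨i, h, _⟩ => (G i).irrefl h⟩


/-!
Call `G` a `c`-cut expander if every `S ⊆ V` is left by at least `c · min (|S|, |V \ S|)` edges.
For a finite graph with at least two vertices this is equivalent to `c ≤ h(G)`, because
`∂S = ∂(V \ S)`. The box product of a `c`-cut expander `G₁` with a `c/2`-cut expander `G₂` is a
`c/2`-cut expander, so induction on `k` gives the theorem. Indeed, the boundary of
`S ⊆ α × β` contains the `G₁`-boundaries of its columns `S_b` and the `G₂`-boundaries of its rows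
`S^a`, and
  `min (|S|, |α||β| - |S|) ≤ 2 ∑_b min (|S_b|, |α| - |S_b|) + ∑_a min (|S^a|, |β| - |S^a|)`.
To see this, round every column to `∅` or to `α`, whichever is nearer. This changes
`D = ∑_b min (|S_b|, |α| - |S_b|)` cells and produces a product `α × H`, all of whose rows equal
`H`. Since `x ↦ min (x, n - x)` is `1`-Lipschitz, the row sum is at least
`|α| · min (|H|, |β| - |H|) - D`, while the left side is at most `|α| · min (|H|, |β| - |H|) + D`.
-/

open Finset SimpleGraph

section

variable {V W : Type*}

lemma boundarySize_compl (G : SimpleGraph V) (S : Set V) :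
    boundarySize G Sᶜ = boundarySize G S := by
  unfold boundarySize
  congr 1
  ext e
  simp only [Set.mem_ofPred_eq, Set.mem_compl_iff, not_not]
  constructor <;> rintro ⟨he, u, hu, huS, v, hv, hvS⟩ <;> exact ⟨he, v, hv, hvS, u, hu, huS⟩

lemma boundarySize_coe_eq_card_interedges [Fintype V] [DecidableEq V] (G : SimpleGraph V)
    [DecidableRel G.Adj] (S : Finset V) : boundarySize G S = #(G.interedges S Sᶜ) := by
  have himage : {e ∈ G.edgeSet | ∃ u ∈ e, u ∈ (S : Set V) ∧ ∃ v ∈ e, v ∉ (S : Set V)} =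
      (fun p : V × V ↦ s(p.1, p.2)) '' (G.interedges S Sᶜ : Set (V × V)) := by
    ext e
    induction e using Sym2.ind with | _ x y => ?_
    simp only [Set.mem_ofPred_eq, mem_edgeSet, Sym2.mem_iff, Set.mem_image, mem_coe,
      mem_interedges_iff, mem_compl, Prod.exists, Sym2.eq_iff]
    constructor
    · rintro ⟨hxy, u, rfl | rfl, huS, v, rfl | rfl, hvS⟩
      all_goals grind [G.adj_symm]
    · grind [G.adj_symm]
  have hinj : Set.InjOn (fun p : V × V ↦ s(p.1, p.2)) (G.interedges S Sᶜ : Set (V × V)) := by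
    rintro ⟨x, y⟩ hxy ⟨x', y'⟩ hxy' h
    simp only [mem_coe, mem_interedges_iff, mem_compl] at hxy hxy'
    rcases Sym2.eq_iff.mp h with ⟨rfl, rfl⟩ | ⟨rfl, rfl⟩
    · rfl
    · exact absurd hxy.1 hxy'.2.1
  rw [boundarySize, himage, hinj.ncard_image, Set.ncard_coe_finset]

lemma boundarySize_image_iso {G : SimpleGraph V} {H : SimpleGraph W} (φ : G ≃g H) (S : Set V) :
    boundarySize H (φ '' S) = boundarySize G S := by
  have hsurj : Function.Surjective (Sym2.map φ.symm) := fun e ↦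
    ⟨Sym2.map φ e, by simp [Sym2.map_map]⟩
  have hS : ⇑φ '' S = φ.symm ⁻¹' S := φ.toEquiv.image_eq_preimage_symm S
  rw [boundarySize, boundarySize, ← Set.ncard_preimage_of_injective_subset_range
    (Sym2.map.injective φ.symm.injective) (by simp [hsurj.range_eq]), hS]
  congr 1
  ext e
  induction e using Sym2.ind with | _ x y => ?_
  simp [φ.symm.map_adj_iff]

lemma expansion_nonneg (G : SimpleGraph V) : 0 ≤ expansion G :=
  Real.sInf_nonneg <| by rintro _ ⟨S, -, -, rfl⟩; positivity

lemma expansion_le_boundarySize_div {G : SimpleGraph V} {S : Set V} (hS : S.Nonempty)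
    (hcard : 2 * S.ncard ≤ Nat.card V) : expansion G ≤ boundarySize G S / S.ncard :=
  csInf_le ⟨0, by rintro _ ⟨S, -, -, rfl⟩; positivity⟩ ⟨S, hS, hcard, rfl⟩

lemma two_le_card_of_expansion_pos [Fintype V] {G : SimpleGraph V} (hG : 0 < expansion G) :
    2 ≤ Fintype.card V := by
  by_contra! hV
  have hempty : {x : ℝ | ∃ S : Set V, S.Nonempty ∧ 2 * S.ncard ≤ Nat.card V ∧
      x = boundarySize G S / S.ncard} = ∅ := by
    refine Set.eq_empty_of_forall_notMem ?_
    rintro _ ⟨S, hS, hcard, -⟩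
    have := (Set.ncard_pos S.toFinite).2 hS
    rw [Nat.card_eq_fintype_card] at hcard
    omega
  rw [expansion, hempty, Real.sInf_empty] at hG
  exact hG.false

end

section GridInequality

variable {α β : Type*} [Fintype α] [Fintype β]

lemma min_sub_le_min_sub_add_abs (n x y : ℝ) : min x (n - x) ≤ min y (n - y) + |x - y| := by
  have h := abs_min_sub_min_le_max x (n - x) y (n - y)
  rw [show n - x - (n - y) = -(x - y) by ring, abs_neg, max_self] at h
  linarith [le_abs_self (min x (n - x) - min y (n - y))]

lemma sum_abs_sub_round_eq_min (x : α → ℝ) (h0 : ∀ a, 0 ≤ x a) (h1 : ∀ a, x a ≤ 1) :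
    ∑ a, |x a - if (Fintype.card α : ℝ) < 2 * ∑ a, x a then 1 else 0| =
      min (∑ a, x a) (Fintype.card α - ∑ a, x a) := by
  split_ifs with h
  · simp_rw [abs_of_nonpos (sub_nonpos.2 (h1 _)), neg_sub, sum_sub_distrib, sum_const, card_univ,
      nsmul_one]
    exact (min_eq_right (by linarith)).symm
  · simp_rw [sub_zero, abs_of_nonneg (h0 _)]
    exact (min_eq_left (by linarith)).symm

theorem min_sum_le_sum_min_col_row (χ : α → β → ℝ) (h0 : ∀ a b, 0 ≤ χ a b)
    (h1 : ∀ a b, χ a b ≤ 1) :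
    min (∑ a, ∑ b, χ a b) (Fintype.card α * Fintype.card β - ∑ a, ∑ b, χ a b) ≤
      2 * ∑ b, min (∑ a, χ a b) (Fintype.card α - ∑ a, χ a b) +
        ∑ a, min (∑ b, χ a b) (Fintype.card β - ∑ b, χ a b) := by
  set n : ℝ := (Fintype.card α : ℝ)
  set M : ℝ := (Fintype.card β : ℝ)
  set rounded : β → ℝ := fun b ↦ if n < 2 * ∑ a, χ a b then 1 else 0
  set numFull := ∑ b, rounded b
  set D := ∑ a, ∑ b, |χ a b - rounded b| with hD_def
  have hD : D = ∑ b, min (∑ a, χ a b) (n - ∑ a, χ a b) := by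
    rw [hD_def, sum_comm]
    exact sum_congr rfl fun b _ ↦ sum_abs_sub_round_eq_min (χ · b) (h0 · b) (h1 · b)
  have hrow (a : α) : |∑ b, χ a b - numFull| ≤ ∑ b, |χ a b - rounded b| := by
    rw [← sum_sub_distrib]
    exact abs_sum_le_sum_abs _ _
  have htotal : |∑ a, ∑ b, χ a b - n * numFull| ≤ D := calc
    _ = |∑ a, (∑ b, χ a b - numFull)| := by
      rw [sum_sub_distrib, sum_const, card_univ, nsmul_eq_mul]
    _ ≤ ∑ a, |∑ b, χ a b - numFull| := abs_sum_le_sum_abs _ _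
    _ ≤ D := sum_le_sum fun a _ ↦ hrow a
  have hrows : n * min numFull (M - numFull) - D ≤ ∑ a, min (∑ b, χ a b) (M - ∑ b, χ a b) := calc
    _ = ∑ a, (min numFull (M - numFull) - ∑ b, |χ a b - rounded b|) := by
      rw [sum_sub_distrib, sum_const, card_univ, nsmul_eq_mul]
    _ ≤ _ := sum_le_sum fun a _ ↦ by
      linarith [min_sub_le_min_sub_add_abs M numFull (∑ b, χ a b), hrow a,
        abs_sub_comm numFull (∑ b, χ a b)]
  have hscale : min (n * numFull) (n * M - n * numFull) = n * min numFull (M - numFull) := by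
    rw [← mul_sub, mul_min_of_nonneg _ _ (Nat.cast_nonneg _)]
  linarith [min_sub_le_min_sub_add_abs (n * M) (∑ a, ∑ b, χ a b) (n * numFull)]

end GridInequality

section Slices

variable {α β : Type*} [Fintype α] [Fintype β] [DecidableEq α] [DecidableEq β]

def colSlice (S : Finset (α × β)) (b : β) : Finset α := {a | (a, b) ∈ S}

def rowSlice (S : Finset (α × β)) (a : α) : Finset β := {b | (a, b) ∈ S}

lemma min_card_le_sum_min_card_slices (S : Finset (α × β)) :
    min (#S : ℝ) (Fintype.card α * Fintype.card β - #S) ≤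
      2 * ∑ b, min (#(colSlice S b) : ℝ) (Fintype.card α - #(colSlice S b)) +
        ∑ a, min (#(rowSlice S a) : ℝ) (Fintype.card β - #(rowSlice S a)) := by
  have hS : (#S : ℝ) = ∑ a, ∑ b, if (a, b) ∈ S then 1 else 0 := by
    rw [← Fintype.sum_prod_type', sum_boole, filter_mem_eq_inter, univ_inter]
  simpa [hS, colSlice, rowSlice, sum_boole] using
    min_sum_le_sum_min_col_row (fun a b ↦ if (a, b) ∈ S then (1 : ℝ) else 0)
      (fun _ _ ↦ by split_ifs <;> norm_num) (fun _ _ ↦ by split_ifs <;> norm_num)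

lemma sum_boundarySize_slices_le (G₁ : SimpleGraph α) (G₂ : SimpleGraph β) (S : Finset (α × β)) :
    ∑ b, boundarySize G₁ (colSlice S b) + ∑ a, boundarySize G₂ (rowSlice S a) ≤
      boundarySize (G₁ □ G₂) S := by
  classical
  simp only [boundarySize_coe_eq_card_interedges]
  rw [← card_sigma, ← card_sigma, ← card_disjSum]
  refine card_le_card_of_injOn
    (Sum.elim (fun p ↦ ((p.2.1, p.1), (p.2.2, p.1))) (fun p ↦ ((p.1, p.2.1), (p.1, p.2.2))))
    ?_ ?_
  · rintro (⟨b, a, a'⟩ | ⟨a, b, b'⟩) h <;>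
      simp_all [mem_interedges_iff, colSlice, rowSlice, boxProd_adj]
  · rintro (⟨b, a, a'⟩ | ⟨a, b, b'⟩) h (⟨b₂, a₂, a₂'⟩ | ⟨a₂, b₂, b₂'⟩) h₂ heq <;>
      simp_all [mem_interedges_iff, colSlice, rowSlice]

end Slices

def IsCutExpander {V : Type*} [Fintype V] (c : ℝ) (G : SimpleGraph V) : Prop :=
  ∀ S : Finset V, c * min (#S : ℝ) (Fintype.card V - #S) ≤ boundarySize G S

section CutExpander

variable {V W : Type*} [Fintype V] [Fintype W] {c : ℝ} {G : SimpleGraph V} {H : SimpleGraph W}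

lemma isCutExpander_of_le_expansion (hc : c ≤ expansion G) : IsCutExpander c G := by
  classical
  have small (S : Finset V) (hS : 2 * #S ≤ Fintype.card V) : c * #S ≤ boundarySize G S := by
    rcases S.eq_empty_or_nonempty with rfl | hne
    · simp
    have hpos : (0 : ℝ) < #S := by exact_mod_cast hne.card_pos
    have := hc.trans (expansion_le_boundarySize_div (G := G) (S := S) (by simpa using hne)
      (by simpa [Nat.card_eq_fintype_card] using hS))
    rwa [Set.ncard_coe_finset, le_div_iff₀ hpos] at this
  intro S
  rcases le_total (2 * #S) (Fintype.card V) with hS | hS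
  · rw [min_eq_left (by rify at hS; linarith)]
    exact small S hS
  · have hcompl : #Sᶜ = Fintype.card V - #S := card_compl S
    rw [min_eq_right (by rify at hS; linarith), ← boundarySize_compl, ← coe_compl,
      ← Nat.cast_sub S.card_le_univ, ← hcompl]
    exact small Sᶜ (by omega)

lemma IsCutExpander.le_expansion (h : IsCutExpander c G) (hV : 2 ≤ Fintype.card V) :
    c ≤ expansion G := by
  obtain ⟨x⟩ : Nonempty V := Fintype.card_pos_iff.1 (by omega)
  refine le_csInf ⟨_, {x}, Set.singleton_nonempty x, ?_, rfl⟩ ?_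
  · simpa [Nat.card_eq_fintype_card] using hV
  rintro _ ⟨S, hS, hcard, rfl⟩
  obtain ⟨S, rfl⟩ := S.toFinite.exists_finset_coe
  rw [Set.ncard_coe_finset, Nat.card_eq_fintype_card] at hcard
  rw [Set.ncard_coe_finset, le_div_iff₀ (by exact_mod_cast (coe_nonempty.1 hS).card_pos)]
  have := h S
  rwa [min_eq_left (by rify at hcard; linarith)] at this

lemma IsCutExpander.of_iso (h : IsCutExpander c G) (φ : G ≃g H) : IsCutExpander c H := by
  classical
  intro S
  have := h (S.map φ.symm.toEquiv.toEmbedding)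
  rw [card_map, Fintype.card_congr φ.toEquiv, coe_map] at this
  rwa [← boundarySize_image_iso φ.symm]
theorem IsCutExpander.boxProd {α β : Type*} [Fintype α] [Fintype β] {G₁ : SimpleGraph α}
    {G₂ : SimpleGraph β} (hc : 0 ≤ c) (h₁ : IsCutExpander c G₁) (h₂ : IsCutExpander (c / 2) G₂) :
    IsCutExpander (c / 2) (G₁ □ G₂) := by
  classical
  intro S
  calc c / 2 * min (#S : ℝ) (Fintype.card (α × β) - #S)
      ≤ c / 2 * (2 * ∑ b, min (#(colSlice S b) : ℝ) (Fintype.card α - #(colSlice S b)) +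
          ∑ a, min (#(rowSlice S a) : ℝ) (Fintype.card β - #(rowSlice S a))) := by
        rw [Fintype.card_prod, Nat.cast_mul]
        gcongr
        exact min_card_le_sum_min_card_slices S
    _ = ∑ b, c * min (#(colSlice S b) : ℝ) (Fintype.card α - #(colSlice S b)) +
          ∑ a, c / 2 * min (#(rowSlice S a) : ℝ) (Fintype.card β - #(rowSlice S a)) := by
        rw [← mul_sum, ← mul_sum]; ring
    _ ≤ ∑ b, (boundarySize G₁ (colSlice S b) : ℝ) + ∑ a, (boundarySize G₂ (rowSlice S a) : ℝ) :=
        add_le_add (sum_le_sum fun b _ ↦ h₁ _) (sum_le_sum fun a _ ↦ h₂ _)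
    _ ≤ boundarySize (G₁ □ G₂) S := by exact_mod_cast sum_boundarySize_slices_le G₁ G₂ S

end CutExpander

def boxProdManyConsIso {k : ℕ} {V : Fin (k + 1) → Type*} (G : ∀ i, SimpleGraph (V i)) :
    (G 0).boxProd (boxProdMany fun i ↦ G i.succ) ≃g boxProdMany G where
  toEquiv := Fin.consEquiv V
  map_rel_iff' {x y} := by
    simp only [Fin.consEquiv_apply, boxProdMany, boxProd_adj, Fin.exists_fin_succ,
      Fin.forall_fin_succ, Fin.cons_zero, Fin.cons_succ, Fin.succ_inj, funext_iff, ne_eq,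
      Fin.succ_ne_zero, (Fin.succ_ne_zero _).symm, not_true_eq_false, not_false_eq_true,
      IsEmpty.forall_iff, forall_const, true_and, and_left_comm, exists_and_left]
    tauto

theorem isCutExpander_boxProdMany {c : ℝ} (hc : 0 ≤ c) {k : ℕ} {V : Fin k → Type*}
    [∀ i, Fintype (V i)] (G : ∀ i, SimpleGraph (V i)) (h : ∀ i, IsCutExpander c (G i)) :
    IsCutExpander (c / 2) (boxProdMany G) := by
  induction k with
  | zero =>
    intro S
    have : #S ≤ 1 := by simpa using S.card_le_univ
    interval_cases #S <;> simp
  | succ k ih =>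
    exact ((h 0).boxProd hc (ih _ fun i ↦ h i.succ)).of_iso (boxProdManyConsIso G)

theorem expansion_boxProdMany_general (k : ℕ) (hk : 0 < k) (V : Fin k → Type*) [∀ i, Fintype (V i)]
    (G : ∀ i, SimpleGraph (V i)) (c : ℝ)
    (hc : ∀ i, c ≤ expansion (G i)) :
    c / 2 ≤ expansion (boxProdMany G) := by
  rcases le_or_gt c 0 with hc0 | hc0
  · linarith [expansion_nonneg (boxProdMany G)]
  have hV (i : Fin k) : 2 ≤ Fintype.card (V i) :=
    two_le_card_of_expansion_pos (hc0.trans_le (hc i))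
  have hcard : 2 ≤ Fintype.card (∀ i, V i) := by
    rw [Fintype.card_pi]
    exact (hV ⟨0, hk⟩).trans
      (single_le_prod' (fun i _ ↦ one_le_two.trans (hV i)) (mem_univ _))
  exact (isCutExpander_boxProdMany hc0.le G
    fun i ↦ isCutExpander_of_le_expansion (hc i)).le_expansion hcard

/-- The expansion of a Cartesian product of finite nonempty graphs is at least half the minimum
of the expansions of the factors: if `c ≤ h(Gᵢ)` for all `i`, then `c/2 ≤ h(G)`. -/
theorem expansion_boxProdMany (k : ℕ) (hk : 0 < k) (V : Fin k → Type*) [∀ i, Fintype (V i)]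
    [∀ i, Nonempty (V i)] (G : ∀ i, SimpleGraph (V i)) (c : ℝ)
    (hc : ∀ i, c ≤ expansion (G i)) :
    c / 2 ≤ expansion (boxProdMany G) :=
  expansion_boxProdMany_general k hk V G c hc
end

section
/- There exist constants c > 0 and N such that for all n >= N and all distinct central diagonals D, D' of the regular (2n+2)-gon, |E(D, D')| / |Psi(D)| <= c / d(D, D')^{3/2}, where d(D, D') in [1, (n+1)/2] is determined by the property that the rectangle with diagonals D and D' cuts the polygon into two (d+1)-gons and two (n-d+2)-gons. -/
open scoped BigOperators

/-- `x` lies strictly inside the (clockwise) arc from `a` to `b` of the regular `m`-gon,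
whose vertices are labeled by `ZMod m`. -/
def arcMem (m : ℕ) (a b x : ZMod m) : Prop :=
  0 < (x - a).val ∧ (x - a).val < (b - a).val

/-- Ordered version of the crossing predicate for the chords `{a,b}` and `{c,d}`:
exactly one of `c, d` lies strictly inside the open arc from `a` to `b`. -/
def crossPairs (m : ℕ) (a b c d : ZMod m) : Prop :=
  (arcMem m a b c ∧ arcMem m b a d) ∨ (arcMem m a b d ∧ arcMem m b a c)

/-- Two chords of the convex `m`-gon cross (in their interiors). -/
def Crosses (m : ℕ) (e f : Sym2 (ZMod m)) : Prop :=
  ∃ a b c d : ZMod m, e = s(a, b) ∧ f = s(c, d) ∧ crossPairs m a b c d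

/-- `e` is a diagonal of the convex `m`-gon: its endpoints are distinct and non-adjacent. -/
def IsDiagonal (m : ℕ) (e : Sym2 (ZMod m)) : Prop :=
  ∃ a b : ZMod m, e = s(a, b) ∧ a ≠ b ∧ b ≠ a + 1 ∧ a ≠ b + 1

/-- A triangulation of the convex `m`-gon: a maximal set of pairwise non-crossing diagonals. -/
def IsTriangulation (m : ℕ) (T : Finset (Sym2 (ZMod m))) : Prop :=
  (∀ e ∈ T, IsDiagonal m e) ∧
  (∀ e ∈ T, ∀ f ∈ T, ¬ Crosses m e f) ∧
  (∀ e, IsDiagonal m e → e ∉ T → ∃ f ∈ T, Crosses m e f)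

/-- A diagonal of the regular `(2n+2)`-gon is central if it joins two opposite vertices,
i.e. passes through the center of the polygon. -/
def IsCentral (n : ℕ) (e : Sym2 (ZMod (2 * n + 2))) : Prop :=
  ∃ a : ZMod (2 * n + 2), e = s(a, a + (n : ZMod (2 * n + 2)) + 1)

/-- The central diagonal of the regular `(2n+2)`-gon with endpoint `a`. -/
def centralDiag (n : ℕ) (a : ZMod (2 * n + 2)) : Sym2 (ZMod (2 * n + 2)) :=
  s(a, a + (n : ZMod (2 * n + 2)) + 1)

/-- A centrally-symmetric triangulation of the regular `(2n+2)`-gon: a triangulation invariant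
under 180-degree rotation, i.e. under adding `n+1` to every vertex label. -/
def CSTriangulation (n : ℕ) (T : Finset (Sym2 (ZMod (2 * n + 2)))) : Prop :=
  IsTriangulation (2 * n + 2) T ∧
  ∀ e ∈ T, Sym2.map (· + ((n : ZMod (2 * n + 2)) + 1)) e ∈ T

/-!
Cutting along `D = a — a + n + 1`, a triangulation in `Ψ(D)` is determined by its half, a
triangulation of the `(n + 2)`-gon `a, a + 1, …, a + n + 1`, so `|Ψ(D)| = C_n` by the Catalan
recursion. Let `(T₁, T₂) ∈ E(D, D')` with `D' = a + t — a + t + n + 1`. The set `T₁ \ T₂` is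
stable under the half-turn and its only fixed chord is `D`, so it is `{D}`; likewise
`T₂ \ T₁ = {D'}`. Every chord of `T₁` crossing `a — a + t` or `a + t — a + n + 1` would survive
the flip and cross `D` or `D'`, so both are sides of the triangle of `T₁` on `D`, and `T₁`
(hence `T₂`) is determined by its restrictions to the `(t + 1)`-gon and the `(n + 2 - t)`-gon on
either side of that triangle: `|E(D, D')| ≤ C_(t-1) C_(n-t)`. The elementary bounds
`16^k ≤ 4 (k + 1)^3 C_k^2` and `(k + 1)^3 C_k^2 ≤ 16^k` then give
`C_(t-1) C_(n-t) / C_n ≤ 2 / d^(3/2)` with `d = min t (n + 1 - t)`.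
-/

namespace TypeB

section Chords

variable {m : ℕ}

/-- Measured as offsets from a base vertex, crossing of chords becomes interleaving of natural
numbers (`crosses_chordAt_iff`). -/
def chordAt (p : ZMod m) (i j : ℕ) : Sym2 (ZMod m) := s(p + i, p + j)

theorem natCast_inj_of_lt {i j : ℕ} (hi : i < m) (hj : j < m) : (i : ZMod m) = j ↔ i = j := by
  rw [ZMod.natCast_eq_natCast_iff', Nat.mod_eq_of_lt hi, Nat.mod_eq_of_lt hj]

theorem natCast_sub_self {i : ℕ} (h : m ≤ i) : ((i - m : ℕ) : ZMod m) = i := by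
  rw [Nat.cast_sub h, ZMod.natCast_self, sub_zero]

theorem chordAt_comm (p : ZMod m) (i j : ℕ) : chordAt p i j = chordAt p j i := Sym2.eq_swap

theorem chordAt_add_natCast (p : ZMod m) (q i j : ℕ) :
    chordAt (p + (q : ZMod m)) i j = chordAt p (q + i) (q + j) := by
  simp only [chordAt, Nat.cast_add, add_assoc]

theorem chordAt_sub_self_left (p : ZMod m) {i : ℕ} (j : ℕ) (h : m ≤ i) :
    chordAt p (i - m) j = chordAt p i j := by
  rw [chordAt, natCast_sub_self h, chordAt]

theorem chordAt_sub_self_right (p : ZMod m) (i : ℕ) {j : ℕ} (h : m ≤ j) :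
    chordAt p i (j - m) = chordAt p i j := by
  rw [chordAt, natCast_sub_self h, chordAt]

theorem chordAt_eq_chordAt_iff (p : ZMod m) {i j u v : ℕ} (hi : i < m) (hj : j < m)
    (hu : u < m) (hv : v < m) :
    chordAt p i j = chordAt p u v ↔ (i = u ∧ j = v) ∨ (i = v ∧ j = u) := by
  simp only [chordAt, Sym2.eq_iff, add_right_inj, natCast_inj_of_lt hi hu,
    natCast_inj_of_lt hj hv, natCast_inj_of_lt hi hv, natCast_inj_of_lt hj hu]

theorem exists_chordAt_eq [NeZero m] (p : ZMod m) (e : Sym2 (ZMod m)) :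
    ∃ i j, i ≤ j ∧ j < m ∧ e = chordAt p i j := by
  induction e using Sym2.inductionOn with
  | hf a b =>
    have hval (x : ZMod m) : x = p + ((x - p).val : ℕ) := by simp
    rcases le_total (a - p).val (b - p).val with h | h
    · exact ⟨_, _, h, ZMod.val_lt _, by rw [chordAt, ← hval, ← hval]⟩
    · exact ⟨_, _, h, ZMod.val_lt _, by rw [chordAt, ← hval, ← hval, Sym2.eq_swap]⟩

theorem val_add_natCast_sub_add_natCast (p : ZMod m) {i j : ℕ} (hi : i < m) (hj : j < m) :
    ((p + j) - (p + i)).val = if i ≤ j then j - i else m + j - i := by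
  have h : (p + j) - (p + i) = ((j + m - i : ℕ) : ZMod m) := by
    rw [Nat.cast_sub (by omega)]; push_cast; rw [ZMod.natCast_self]; ring
  rw [h, ZMod.val_natCast]
  split_ifs with hij
  · rw [show j + m - i = j - i + m by omega, Nat.add_mod_right, Nat.mod_eq_of_lt (by omega)]
  · rw [Nat.mod_eq_of_lt (by omega)]; omega

theorem crossPairs_swap_left {a b c d : ZMod m} : crossPairs m a b c d ↔ crossPairs m b a c d := by
  unfold crossPairs; tauto

theorem crossPairs_swap_right {a b c d : ZMod m} : crossPairs m a b c d ↔ crossPairs m a b d c := by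
  unfold crossPairs; tauto

theorem crosses_mk_iff {a b c d : ZMod m} : Crosses m s(a, b) s(c, d) ↔ crossPairs m a b c d := by
  refine ⟨fun ⟨a', b', c', d', he, hf, h⟩ => ?_, fun h => ⟨a, b, c, d, rfl, rfl, h⟩⟩
  rw [Sym2.eq_iff] at he hf
  rcases he with ⟨rfl, rfl⟩ | ⟨rfl, rfl⟩ <;> rcases hf with ⟨rfl, rfl⟩ | ⟨rfl, rfl⟩
  exacts [h, crossPairs_swap_right.1 h, crossPairs_swap_left.1 h,
    crossPairs_swap_left.1 (crossPairs_swap_right.1 h)]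

theorem crosses_chordAt_iff (p : ZMod m) {i j u v : ℕ} (hij : i < j) (hj : j < m) (huv : u < v)
    (hv : v < m) :
    Crosses m (chordAt p i j) (chordAt p u v) ↔
      (i < u ∧ u < j ∧ j < v) ∨ (u < i ∧ i < v ∧ v < j) := by
  have hi : i < m := hij.trans hj
  have hu : u < m := huv.trans hv
  rw [chordAt, chordAt, crosses_mk_iff]
  simp only [crossPairs, arcMem, val_add_natCast_sub_add_natCast p hi hu,
    val_add_natCast_sub_add_natCast p hi hj, val_add_natCast_sub_add_natCast p hj hv,
    val_add_natCast_sub_add_natCast p hj hi, val_add_natCast_sub_add_natCast p hi hv,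
    val_add_natCast_sub_add_natCast p hj hu]
  split_ifs <;> omega

theorem isDiagonal_mk_iff {x y : ZMod m} :
    IsDiagonal m s(x, y) ↔ x ≠ y ∧ y ≠ x + 1 ∧ x ≠ y + 1 := by
  refine ⟨fun ⟨a, b, he, h⟩ => ?_, fun h => ⟨x, y, rfl, h⟩⟩
  rw [Sym2.eq_iff] at he
  rcases he with ⟨rfl, rfl⟩ | ⟨rfl, rfl⟩
  exacts [h, ⟨h.1.symm, h.2.2, h.2.1⟩]

theorem isDiagonal_chordAt_iff (p : ZMod m) {i j : ℕ} (hij : i < j) (hj : j < m) :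
    IsDiagonal m (chordAt p i j) ↔ i + 2 ≤ j ∧ j + 2 ≤ i + m := by
  have hi : i < m := hij.trans hj
  have hsucc (a b : ℕ) :
      p + (a : ZMod m) = p + b + 1 ↔ (a : ZMod m) = (((b + 1) % m : ℕ) : ZMod m) := by
    rw [ZMod.natCast_mod, add_assoc, add_right_inj, Nat.cast_succ]
  have hm : 0 < m := by omega
  rw [chordAt, isDiagonal_mk_iff, Ne, Ne, Ne, add_right_inj, hsucc, hsucc,
    natCast_inj_of_lt hi hj, natCast_inj_of_lt hj (Nat.mod_lt _ hm),
    natCast_inj_of_lt hi (Nat.mod_lt _ hm), Nat.mod_eq_of_lt (show i + 1 < m by omega)]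
  rcases (show j + 1 < m ∨ j + 1 = m by omega) with h | h
  · rw [Nat.mod_eq_of_lt h]; omega
  · rw [h, Nat.mod_self]; omega

theorem exists_chordAt_of_isDiagonal [NeZero m] (p : ZMod m) {e : Sym2 (ZMod m)}
    (he : IsDiagonal m e) : ∃ u v, u + 2 ≤ v ∧ v < m ∧ v + 2 ≤ u + m ∧ e = chordAt p u v := by
  obtain ⟨u, v, huv, hv, rfl⟩ := exists_chordAt_eq p e
  have huv' : u < v := huv.lt_of_ne <| by
    rintro rfl
    rw [chordAt, isDiagonal_mk_iff] at he
    exact he.1 rfl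
  obtain ⟨h2, hm⟩ := (isDiagonal_chordAt_iff p huv' hv).1 he
  exact ⟨u, v, h2, hv, hm, rfl⟩

theorem Crosses.map_add (c : ZMod m) {e f : Sym2 (ZMod m)} (h : Crosses m e f) :
    Crosses m (Sym2.map (· + c) e) (Sym2.map (· + c) f) := by
  obtain ⟨x, y, z, w, rfl, rfl, h⟩ := h
  refine ⟨x + c, y + c, z + c, w + c, rfl, rfl, ?_⟩
  simpa only [crossPairs, arcMem, add_sub_add_right_eq_sub] using h

end Chords

section ArcTriangulations

open scoped Classical

variable {m : ℕ}

/-- `e` is a diagonal of the convex polygon with vertices `p, p + 1, …, p + k`, whose sides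
include `p — p + k`. -/
def IsArcChord (p : ZMod m) (k : ℕ) (e : Sym2 (ZMod m)) : Prop :=
  ∃ i j, i + 2 ≤ j ∧ j ≤ k ∧ ¬(i = 0 ∧ j = k) ∧ e = chordAt p i j

def IsArcTriangulation (p : ZMod m) (k : ℕ) (T : Finset (Sym2 (ZMod m))) : Prop :=
  (∀ e ∈ T, IsArcChord p k e) ∧
  (∀ e ∈ T, ∀ f ∈ T, ¬ Crosses m e f) ∧
  (∀ e, IsArcChord p k e → e ∉ T → ∃ f ∈ T, Crosses m e f)

/-- `p + q` is the third vertex of the triangle of `T` on the side `p — p + k`. -/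
def IsApex (p : ZMod m) (k : ℕ) (T : Finset (Sym2 (ZMod m))) (q : ℕ) : Prop :=
  1 ≤ q ∧ q < k ∧ (q = 1 ∨ chordAt p 0 q ∈ T) ∧ (q + 1 = k ∨ chordAt p q k ∈ T)

def apexChords (p : ZMod m) (k q : ℕ) : Finset (Sym2 (ZMod m)) :=
  (if 2 ≤ q then {chordAt p 0 q} else ∅) ∪ (if q + 2 ≤ k then {chordAt p q k} else ∅)

def glue (p : ZMod m) (k q : ℕ) (T₁ T₂ : Finset (Sym2 (ZMod m))) : Finset (Sym2 (ZMod m)) :=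
  T₁ ∪ T₂ ∪ apexChords p k q

variable {p : ZMod m} {k q : ℕ} {T T₁ T₂ : Finset (Sym2 (ZMod m))}

theorem isArcChord_chordAt_iff {i j : ℕ} (hij : i ≤ j) (hj : j < m) (hk : k < m) :
    IsArcChord p k (chordAt p i j) ↔ i + 2 ≤ j ∧ j ≤ k ∧ ¬(i = 0 ∧ j = k) := by
  refine ⟨fun ⟨u, v, h2, hv, hcl, he⟩ => ?_, fun ⟨h2, hj, hcl⟩ => ⟨i, j, h2, hj, hcl, rfl⟩⟩
  rw [chordAt_eq_chordAt_iff p (by omega) hj (by omega) (by omega)] at he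
  omega

theorem isArcChord_shift_iff {u v : ℕ} (huv : u ≤ v) (hv : v < m) (hk : k < m) (hqk : q ≤ k) :
    IsArcChord (p + (q : ZMod m)) (k - q) (chordAt p u v) ↔
      q ≤ u ∧ u + 2 ≤ v ∧ v ≤ k ∧ ¬(u = q ∧ v = k) := by
  constructor
  · rintro ⟨i, j, hij, hj, hcl, he⟩
    rw [chordAt_add_natCast, chordAt_eq_chordAt_iff p (by omega) hv (by omega) (by omega)] at he
    omega
  · rintro ⟨hqu, huv2, hvk, hcl⟩
    refine ⟨u - q, v - q, by omega, by omega, by omega, ?_⟩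
    rw [chordAt_add_natCast, Nat.add_sub_cancel' hqu, Nat.add_sub_cancel' (by omega)]

theorem mem_apexChords {e : Sym2 (ZMod m)} :
    e ∈ apexChords p k q ↔ (2 ≤ q ∧ e = chordAt p 0 q) ∨ (q + 2 ≤ k ∧ e = chordAt p q k) := by
  unfold apexChords
  split_ifs <;> simp [*]

theorem IsArcTriangulation.exists_isApex (hT : IsArcTriangulation p k T) (hk2 : 2 ≤ k)
    (hk : k < m) : ∃ q, IsApex p k T q := by
  set P : ℕ → Prop := fun i => 1 ≤ i ∧ (i = 1 ∨ chordAt p 0 i ∈ T)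
  have hP1 : P 1 := ⟨le_rfl, Or.inl rfl⟩
  set q := Nat.findGreatest P (k - 1)
  have hPq : P q := Nat.findGreatest_spec (m := 1) (by omega) hP1
  have hq1 : 1 ≤ q := Nat.le_findGreatest (by omega) hP1
  have hqk : q ≤ k - 1 := Nat.findGreatest_le _
  refine ⟨q, hq1, by omega, hPq.2, ?_⟩
  by_contra! hno
  -- the chord crossing `p + q — p + k` would be a longer chord from `p`, or cross `p — p + q`
  obtain ⟨f, hfT, hcross⟩ := hT.2.2 _ ⟨q, k, by omega, le_rfl, by omega, rfl⟩ hno.2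
  obtain ⟨u, v, huv, hvk, -, rfl⟩ := hT.1 f hfT
  rw [crosses_chordAt_iff p (by omega) hk (by omega) (by omega)] at hcross
  rcases Nat.eq_zero_or_pos u with rfl | hu
  · exact Nat.findGreatest_is_greatest (show q < v by omega) (by omega) ⟨by omega, Or.inr hfT⟩
  · refine hT.2.1 _ (hPq.2.resolve_left (by omega)) _ hfT ?_
    rw [crosses_chordAt_iff p (by omega) (by omega) (by omega) (by omega)]
    omega

theorem IsArcTriangulation.isApex_unique (hT : IsArcTriangulation p k T) (hk : k < m) {q q' : ℕ}
    (h : IsApex p k T q) (h' : IsApex p k T q') : q = q' := by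
  by_contra hne
  wlog hlt : q < q' generalizing q q'
  · exact this h' h (Ne.symm hne) (by omega)
  obtain ⟨hq1, hqk, -, hq⟩ := h
  obtain ⟨hq', hq'k, hq'₀, -⟩ := h'
  refine absurd ?_ (hT.2.1 _ (hq'₀.resolve_left (by omega)) _ (hq.resolve_left (by omega)))
  rw [crosses_chordAt_iff p (by omega) (by omega) (by omega) hk]
  omega

theorem IsArcTriangulation.le_or_le_of_isApex (hT : IsArcTriangulation p k T)
    (hq : IsApex p k T q) (hk : k < m) {u v : ℕ} (huv : u + 2 ≤ v) (hvk : v ≤ k)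
    (hcl : ¬(u = 0 ∧ v = k)) (hf : chordAt p u v ∈ T) : v ≤ q ∨ q ≤ u := by
  obtain ⟨hq1, hqk, hq₀, hqₖ⟩ := hq
  by_contra! h
  rcases Nat.eq_zero_or_pos u with rfl | hu
  · refine hT.2.1 _ hf _ (hqₖ.resolve_left (by omega)) ?_
    rw [crosses_chordAt_iff p (by omega) (by omega) (by omega) (by omega)]
    omega
  · refine hT.2.1 _ hf _ (hq₀.resolve_left (by omega)) ?_
    rw [crosses_chordAt_iff p (by omega) (by omega) (by omega) (by omega)]
    omega

theorem IsArcTriangulation.restrict_left (hT : IsArcTriangulation p k T) (hq : IsApex p k T q)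
    (hk : k < m) : IsArcTriangulation p q (T.filter (IsArcChord p q)) := by
  have hqk := hq.2.1
  refine ⟨fun e he => (Finset.mem_filter.1 he).2,
    fun e he f hf => hT.2.1 e (Finset.mem_filter.1 he).1 f (Finset.mem_filter.1 hf).1,
    fun e he hnot => ?_⟩
  obtain ⟨i, j, hij, hjq, hcl, rfl⟩ := he
  obtain ⟨f, hfT, hcross⟩ := hT.2.2 _ ⟨i, j, hij, by omega, by omega, rfl⟩
    fun h => hnot (Finset.mem_filter.2 ⟨h, i, j, hij, hjq, hcl, rfl⟩)
  obtain ⟨u, v, huv, hvk, hcl', rfl⟩ := hT.1 f hfT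
  have hsplit := hT.le_or_le_of_isApex hq hk huv hvk hcl' hfT
  rw [crosses_chordAt_iff p (by omega) (by omega) (by omega) (by omega)] at hcross
  refine ⟨_, Finset.mem_filter.2 ⟨hfT, u, v, huv, by omega, by omega, rfl⟩, ?_⟩
  rw [crosses_chordAt_iff p (by omega) (by omega) (by omega) (by omega)]
  omega

theorem IsArcTriangulation.restrict_right (hT : IsArcTriangulation p k T) (hq : IsApex p k T q)
    (hk : k < m) :
    IsArcTriangulation (p + (q : ZMod m)) (k - q)
      (T.filter (IsArcChord (p + (q : ZMod m)) (k - q))) := by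
  have hqk := hq.2.1
  refine ⟨fun e he => (Finset.mem_filter.1 he).2,
    fun e he f hf => hT.2.1 e (Finset.mem_filter.1 he).1 f (Finset.mem_filter.1 hf).1,
    fun e he hnot => ?_⟩
  obtain ⟨i, j, hij, hjq, hcl, rfl⟩ := he
  rw [chordAt_add_natCast] at hnot ⊢
  obtain ⟨f, hfT, hcross⟩ := hT.2.2 _ ⟨q + i, q + j, by omega, by omega, by omega, rfl⟩
    fun h => hnot (Finset.mem_filter.2 ⟨h, (isArcChord_shift_iff (by omega) (by omega) hk
      hqk.le).2 (by omega)⟩)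
  obtain ⟨u, v, huv, hvk, hcl', rfl⟩ := hT.1 f hfT
  have hsplit := hT.le_or_le_of_isApex hq hk huv hvk hcl' hfT
  rw [crosses_chordAt_iff p (by omega) (by omega) (by omega) (by omega)] at hcross
  refine ⟨_, Finset.mem_filter.2 ⟨hfT, (isArcChord_shift_iff (by omega) (by omega) hk
    hqk.le).2 (by omega)⟩, ?_⟩
  rw [crosses_chordAt_iff p (by omega) (by omega) (by omega) (by omega)]
  omega

theorem IsArcTriangulation.eq_glue (hT : IsArcTriangulation p k T) (hq : IsApex p k T q)
    (hk : k < m) :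
    T = glue p k q (T.filter (IsArcChord p q))
      (T.filter (IsArcChord (p + (q : ZMod m)) (k - q))) := by
  obtain ⟨hq1, hqk, hq₀, hqₖ⟩ := hq
  ext f
  simp only [glue, Finset.mem_union, Finset.mem_filter, mem_apexChords]
  constructor
  · intro hfT
    obtain ⟨u, v, huv, hvk, hcl, rfl⟩ := hT.1 f hfT
    rcases hT.le_or_le_of_isApex ⟨hq1, hqk, hq₀, hqₖ⟩ hk huv hvk hcl hfT with h | h
    · by_cases hcl' : u = 0 ∧ v = q
      · obtain ⟨rfl, rfl⟩ := hcl'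
        exact Or.inr (Or.inl ⟨by omega, rfl⟩)
      · exact Or.inl (Or.inl ⟨hfT, u, v, huv, h, hcl', rfl⟩)
    · by_cases hcl' : u = q ∧ v = k
      · obtain ⟨rfl, rfl⟩ := hcl'
        exact Or.inr (Or.inr ⟨by omega, rfl⟩)
      · exact Or.inl (Or.inr ⟨hfT, (isArcChord_shift_iff (by omega) (by omega) hk hqk.le).2
          (by omega)⟩)
  · rintro ((⟨hf, -⟩ | ⟨hf, -⟩) | ⟨h2, rfl⟩ | ⟨h2, rfl⟩)
    exacts [hf, hf, hq₀.resolve_left (by omega), hqₖ.resolve_left (by omega)]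

theorem exists_chordAt_of_mem_glue (h₁ : IsArcTriangulation p q T₁)
    (h₂ : IsArcTriangulation (p + (q : ZMod m)) (k - q) T₂) {e : Sym2 (ZMod m)}
    (he : e ∈ glue p k q T₁ T₂) :
    ∃ u v, u + 2 ≤ v ∧ e = chordAt p u v ∧
      ((e ∈ T₁ ∧ v ≤ q ∧ ¬(u = 0 ∧ v = q)) ∨ (e ∈ T₂ ∧ q ≤ u ∧ v ≤ k ∧ ¬(u = q ∧ v = k)) ∨
        (u = 0 ∧ v = q) ∨ (u = q ∧ v = k)) := by
  simp only [glue, Finset.mem_union, mem_apexChords] at he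
  rcases he with (he | he) | ⟨hq, rfl⟩ | ⟨hq, rfl⟩
  · obtain ⟨u, v, huv, hvq, hcl, rfl⟩ := h₁.1 e he
    exact ⟨u, v, huv, rfl, Or.inl ⟨he, hvq, hcl⟩⟩
  · obtain ⟨i, j, hij, hj, hcl, rfl⟩ := h₂.1 e he
    rw [chordAt_add_natCast] at he ⊢
    exact ⟨q + i, q + j, by omega, rfl, Or.inr (Or.inl ⟨he, by omega, by omega, by omega⟩)⟩
  · exact ⟨0, q, hq, rfl, by omega⟩
  · exact ⟨q, k, hq, rfl, by omega⟩

theorem exists_mem_glue_crosses (h₁ : IsArcTriangulation p q T₁)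
    (h₂ : IsArcTriangulation (p + (q : ZMod m)) (k - q) T₂) (hqk : q < k) (hk : k < m)
    {e : Sym2 (ZMod m)} (he : IsArcChord p k e) (hnot : e ∉ glue p k q T₁ T₂) :
    ∃ f ∈ glue p k q T₁ T₂, Crosses m e f := by
  have mem₁ {e} (he : e ∈ T₁) : e ∈ glue p k q T₁ T₂ :=
    Finset.mem_union_left _ (Finset.mem_union_left _ he)
  have mem₂ {e} (he : e ∈ T₂) : e ∈ glue p k q T₁ T₂ :=
    Finset.mem_union_left _ (Finset.mem_union_right _ he)
  have memₐ {e} (he : e ∈ apexChords p k q) : e ∈ glue p k q T₁ T₂ :=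
    Finset.mem_union_right _ he
  obtain ⟨i, j, hij, hjk, hcl, rfl⟩ := he
  by_cases hjq : j ≤ q
  · by_cases hcl' : i = 0 ∧ j = q
    · obtain ⟨rfl, rfl⟩ := hcl'
      exact absurd (memₐ (mem_apexChords.2 (Or.inl ⟨hij, rfl⟩))) hnot
    · obtain ⟨f, hf, hcr⟩ := h₁.2.2 _ ⟨i, j, hij, hjq, hcl', rfl⟩ (hnot ∘ mem₁)
      exact ⟨f, mem₁ hf, hcr⟩
  by_cases hqi : q ≤ i
  · by_cases hcl' : i = q ∧ j = k
    · obtain ⟨rfl, rfl⟩ := hcl'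
      exact absurd (memₐ (mem_apexChords.2 (Or.inr ⟨hij, rfl⟩))) hnot
    · have hiq := (isArcChord_shift_iff (p := p) (by omega) (by omega) hk hqk.le).2
        ⟨hqi, hij, hjk, hcl'⟩
      obtain ⟨f, hf, hcr⟩ := h₂.2.2 _ hiq (hnot ∘ mem₂)
      exact ⟨f, mem₂ hf, hcr⟩
  rcases Nat.eq_zero_or_pos i with rfl | hi
  · refine ⟨chordAt p q k, memₐ (mem_apexChords.2 (Or.inr ⟨by omega, rfl⟩)), ?_⟩
    rw [crosses_chordAt_iff p (by omega) (by omega) (by omega) (by omega)]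
    omega
  · refine ⟨chordAt p 0 q, memₐ (mem_apexChords.2 (Or.inl ⟨by omega, rfl⟩)), ?_⟩
    rw [crosses_chordAt_iff p (by omega) (by omega) (by omega) (by omega)]
    omega

theorem isArcTriangulation_glue (h₁ : IsArcTriangulation p q T₁)
    (h₂ : IsArcTriangulation (p + (q : ZMod m)) (k - q) T₂) (hq : 1 ≤ q) (hqk : q < k)
    (hk : k < m) : IsArcTriangulation p k (glue p k q T₁ T₂) := by
  refine ⟨fun e he => ?_, fun e he f hf => ?_,
    fun e he hnot => exists_mem_glue_crosses h₁ h₂ hqk hk he hnot⟩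
  · obtain ⟨u, v, huv, rfl, h⟩ := exists_chordAt_of_mem_glue h₁ h₂ he
    exact ⟨u, v, huv, by omega, by omega, rfl⟩
  · obtain ⟨u, v, huv, rfl, he'⟩ := exists_chordAt_of_mem_glue h₁ h₂ he
    obtain ⟨u', v', huv', rfl, hf'⟩ := exists_chordAt_of_mem_glue h₁ h₂ hf
    rcases he' with ⟨he₁, he'⟩ | ⟨he₂, he'⟩ | he' | he' <;>
    rcases hf' with ⟨hf₁, hf'⟩ | ⟨hf₂, hf'⟩ | hf' | hf' <;>
    first
    | exact h₁.2.1 _ he₁ _ hf₁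
    | exact h₂.2.1 _ he₂ _ hf₂
    | (rw [crosses_chordAt_iff p (by omega) (by omega) (by omega) (by omega)]; omega)

theorem isApex_glue (hq : 1 ≤ q) (hqk : q < k) : IsApex p k (glue p k q T₁ T₂) q := by
  refine ⟨hq, hqk, ?_, ?_⟩
  · rcases (show q = 1 ∨ 2 ≤ q by omega) with h | h
    · exact Or.inl h
    · exact Or.inr (Finset.mem_union_right _ (mem_apexChords.2 (Or.inl ⟨h, rfl⟩)))
  · rcases (show q + 1 = k ∨ q + 2 ≤ k by omega) with h | h
    · exact Or.inl h
    · exact Or.inr (Finset.mem_union_right _ (mem_apexChords.2 (Or.inr ⟨h, rfl⟩)))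

theorem filter_glue_left (h₁ : IsArcTriangulation p q T₁)
    (h₂ : IsArcTriangulation (p + (q : ZMod m)) (k - q) T₂) (hqk : q < k) (hk : k < m) :
    (glue p k q T₁ T₂).filter (IsArcChord p q) = T₁ := by
  ext e
  refine ⟨fun he => ?_, fun he => Finset.mem_filter.2
    ⟨Finset.mem_union_left _ (Finset.mem_union_left _ he), h₁.1 e he⟩⟩
  obtain ⟨he, hch⟩ := Finset.mem_filter.1 he
  obtain ⟨u, v, huv, rfl, h⟩ := exists_chordAt_of_mem_glue h₁ h₂ he
  rw [isArcChord_chordAt_iff (by omega) (by omega) (by omega)] at hch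
  rcases h with ⟨h, -⟩ | h | h | h
  · exact h
  all_goals omega

theorem filter_glue_right (h₁ : IsArcTriangulation p q T₁)
    (h₂ : IsArcTriangulation (p + (q : ZMod m)) (k - q) T₂) (hqk : q < k) (hk : k < m) :
    (glue p k q T₁ T₂).filter (IsArcChord (p + (q : ZMod m)) (k - q)) = T₂ := by
  ext e
  refine ⟨fun he => ?_, fun he => Finset.mem_filter.2
    ⟨Finset.mem_union_left _ (Finset.mem_union_right _ he), h₂.1 e he⟩⟩
  obtain ⟨he, hch⟩ := Finset.mem_filter.1 he
  obtain ⟨u, v, huv, rfl, h⟩ := exists_chordAt_of_mem_glue h₁ h₂ he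
  rw [isArcChord_shift_iff (by omega) (by omega) hk hqk.le] at hch
  rcases h with h | ⟨h, -⟩ | h | h
  · omega
  · exact h
  all_goals omega

theorem isArcTriangulation_one_iff : IsArcTriangulation p 1 T ↔ T = ∅ := by
  refine ⟨fun hT => Finset.eq_empty_of_forall_notMem fun e he => ?_, ?_⟩
  · obtain ⟨i, j, hij, hj, -⟩ := hT.1 e he
    omega
  · rintro rfl
    refine ⟨by simp, by simp, fun e ⟨i, j, hij, hj, _⟩ => by omega⟩

/-- The Catalan recursion comes from splitting a triangulation at the apex of the triangle on
the side `p — p + k`. -/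
theorem card_isArcTriangulation {k : ℕ} (hk1 : 1 ≤ k) (hk : k < m) (p : ZMod m) :
    Nat.card {T // IsArcTriangulation p k T} = catalan (k - 1) := by
  have : NeZero m := ⟨by omega⟩
  induction k using Nat.strong_induction_on generalizing p with
  | _ k ih =>
  obtain rfl | hk2 := hk1.eq_or_lt
  · simp only [isArcTriangulation_one_iff]
    simp
  let F : (Σ r : Fin (k - 1), {T₁ // IsArcTriangulation p (r + 1) T₁} ×
      {T₂ // IsArcTriangulation (p + ((r + 1 : ℕ) : ZMod m)) (k - (r + 1)) T₂}) →
      {T // IsArcTriangulation p k T} := fun x =>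
    ⟨glue p k (x.1 + 1) x.2.1 x.2.2,
      isArcTriangulation_glue x.2.1.2 x.2.2.2 (by omega) (by omega) hk⟩
  have hF : Function.Bijective F := by
    constructor
    · rintro ⟨r, ⟨T₁, h₁⟩, ⟨T₂, h₂⟩⟩ ⟨r', ⟨T₁', h₁'⟩, ⟨T₂', h₂'⟩⟩ h
      simp only [F, Subtype.mk.injEq] at h
      have hr : r = r' := Fin.ext <| Nat.succ_injective <|
        (isArcTriangulation_glue h₁ h₂ (by omega) (by omega) hk).isApex_unique hk
          (isApex_glue (by omega) (by omega)) (h ▸ isApex_glue (by omega) (by omega))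
      subst hr
      obtain rfl : T₁ = T₁' := by
        rw [← filter_glue_left h₁ h₂ (by omega) hk, h, filter_glue_left h₁' h₂' (by omega) hk]
      obtain rfl : T₂ = T₂' := by
        rw [← filter_glue_right h₁ h₂ (by omega) hk, h, filter_glue_right h₁' h₂' (by omega) hk]
      rfl
    · rintro ⟨T, hT⟩
      obtain ⟨q, hq⟩ := hT.exists_isApex hk2 hk
      obtain ⟨r, rfl⟩ : ∃ r, q = r + 1 := ⟨q - 1, by have := hq.1; omega⟩
      exact ⟨⟨⟨r, by have := hq.2.1; omega⟩, ⟨_, hT.restrict_left hq hk⟩,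
        ⟨_, hT.restrict_right hq hk⟩⟩, Subtype.ext (hT.eq_glue hq hk).symm⟩
  rw [← Nat.card_eq_of_bijective F hF, Nat.card_sigma, show k - 1 = k - 2 + 1 by omega,
    catalan_succ]
  refine Finset.sum_congr rfl fun r _ => ?_
  rw [Nat.card_prod, ih _ (by omega) (by omega) (by omega), ih _ (by omega) (by omega) (by omega)]
  congr 2; omega

end ArcTriangulations

section CentralSymmetry

open scoped Classical

variable {n : ℕ} {a : ZMod (2 * n + 2)} {T T' : Finset (Sym2 (ZMod (2 * n + 2)))}

local notation "σ" => Sym2.map (· + ((n : ZMod (2 * n + 2)) + 1))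

instance (n : ℕ) : NeZero (2 * n + 2) := ⟨by omega⟩

theorem centralDiag_add_natCast (n : ℕ) (a : ZMod (2 * n + 2)) (t : ℕ) :
    centralDiag n (a + (t : ZMod (2 * n + 2))) = chordAt a t (t + (n + 1)) := by
  rw [centralDiag, chordAt]
  congr 1
  push_cast
  ring

theorem centralDiag_eq_chordAt (n : ℕ) (a : ZMod (2 * n + 2)) :
    centralDiag n a = chordAt a 0 (n + 1) := by
  simpa using centralDiag_add_natCast n a 0

theorem map_rotate_chordAt (a : ZMod (2 * n + 2)) (i j : ℕ) :
    σ (chordAt a i j) = chordAt a (i + (n + 1)) (j + (n + 1)) := by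
  rw [chordAt, chordAt, Sym2.map_mk]
  congr 1 <;> push_cast <;> ring

theorem map_rotate_rotate (e : Sym2 (ZMod (2 * n + 2))) : σ (σ e) = e := by
  have h : ((n : ZMod (2 * n + 2)) + 1) + ((n : ZMod (2 * n + 2)) + 1) = 0 := by
    have := ZMod.natCast_self (2 * n + 2)
    push_cast at this
    linear_combination this
  induction e using Sym2.inductionOn with
  | hf x y => simp only [Sym2.map_mk, add_assoc, h, add_zero]

theorem map_rotate_chordAt_of_le {i j : ℕ} (hi : n + 1 ≤ i) (hj : n + 1 ≤ j)
    (a : ZMod (2 * n + 2)) :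
    σ (chordAt a i j) = chordAt a (i - (n + 1)) (j - (n + 1)) := by
  rw [map_rotate_chordAt, ← chordAt_sub_self_left a _ (by omega),
    ← chordAt_sub_self_right a _ (by omega)]
  congr 1 <;> omega

theorem map_rotate_chordAt_of_le_right (i : ℕ) {j : ℕ} (hj : n + 1 ≤ j) (a : ZMod (2 * n + 2)) :
    σ (chordAt a i j) = chordAt a (j - (n + 1)) (i + (n + 1)) := by
  rw [map_rotate_chordAt, ← chordAt_sub_self_right a _ (by omega), chordAt_comm]
  congr 1; omega

theorem exists_chordAt_of_centralDiag_mem (hT : IsTriangulation (2 * n + 2) T)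
    (hD : centralDiag n a ∈ T) {e : Sym2 (ZMod (2 * n + 2))} (he : e ∈ T) :
    ∃ u v, u + 2 ≤ v ∧ v < 2 * n + 2 ∧ v ≤ u + 2 * n ∧ (u = 0 ∨ v ≤ n + 1 ∨ n + 1 ≤ u) ∧
      e = chordAt a u v := by
  obtain ⟨u, v, huv, hv, hvu, rfl⟩ := exists_chordAt_of_isDiagonal a (hT.1 e he)
  have hnc := hT.2.1 _ hD _ he
  rw [centralDiag_eq_chordAt, crosses_chordAt_iff a (by omega) (by omega) (by omega) hv] at hnc
  exact ⟨u, v, huv, hv, by omega, by omega, rfl⟩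

theorem CSTriangulation.restrict_half (hT : CSTriangulation n T) (hD : centralDiag n a ∈ T) :
    IsArcTriangulation a (n + 1) (T.filter (IsArcChord a (n + 1))) := by
  refine ⟨fun e he => (Finset.mem_filter.1 he).2,
    fun e he f hf => hT.1.2.1 e (Finset.mem_filter.1 he).1 f (Finset.mem_filter.1 hf).1,
    fun e he hnot => ?_⟩
  obtain ⟨i, j, hij, hj, hcl, rfl⟩ := he
  have hdiag : IsDiagonal (2 * n + 2) (chordAt a i j) := by
    rw [isDiagonal_chordAt_iff a (by omega) (by omega)]
    omega
  obtain ⟨f, hfT, hcross⟩ := hT.1.2.2 _ hdiag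
    fun h => hnot (Finset.mem_filter.2 ⟨h, i, j, hij, hj, hcl, rfl⟩)
  obtain ⟨u, v, huv, hv, hvu, hside, rfl⟩ := exists_chordAt_of_centralDiag_mem hT.1 hD hfT
  rw [crosses_chordAt_iff a (by omega) (by omega) (by omega) (by omega)] at hcross
  refine ⟨_, Finset.mem_filter.2 ⟨hfT, u, v, huv, by omega, by omega, rfl⟩, ?_⟩
  rw [crosses_chordAt_iff a (by omega) (by omega) (by omega) (by omega)]
  omega

variable (n) in
def symmetrize (a : ZMod (2 * n + 2)) (T' : Finset (Sym2 (ZMod (2 * n + 2)))) :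
    Finset (Sym2 (ZMod (2 * n + 2))) :=
  insert (chordAt a 0 (n + 1)) (T' ∪ T'.image σ)

theorem CSTriangulation.eq_symmetrize (hT : CSTriangulation n T) (hD : centralDiag n a ∈ T) :
    T = symmetrize n a (T.filter (IsArcChord a (n + 1))) := by
  ext e
  simp only [symmetrize, Finset.mem_insert, Finset.mem_union, Finset.mem_image,
    Finset.mem_filter]
  constructor
  · intro he
    obtain ⟨u, v, huv, hv, hvu, hside, rfl⟩ := exists_chordAt_of_centralDiag_mem hT.1 hD he
    by_cases hvn : v ≤ n + 1
    · by_cases hcl : u = 0 ∧ v = n + 1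
      · obtain ⟨rfl, rfl⟩ := hcl
        exact Or.inl rfl
      · exact Or.inr (Or.inl ⟨he, u, v, huv, hvn, hcl, rfl⟩)
    refine Or.inr (Or.inr ⟨σ (chordAt a u v), ⟨hT.2 _ he, ?_⟩, map_rotate_rotate _⟩)
    rcases hside with rfl | h | h
    · rw [map_rotate_chordAt_of_le_right _ (by omega),
        isArcChord_chordAt_iff (by omega) (by omega) (by omega)]
      omega
    · omega
    · rw [map_rotate_chordAt_of_le h (by omega),
        isArcChord_chordAt_iff (by omega) (by omega) (by omega)]
      omega
  · rintro (rfl | ⟨he, -⟩ | ⟨f, ⟨hf, -⟩, rfl⟩)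
    · rwa [← centralDiag_eq_chordAt]
    · exact he
    · exact hT.2 _ hf

theorem exists_chordAt_of_mem_symmetrize (hT' : IsArcTriangulation a (n + 1) T')
    {e : Sym2 (ZMod (2 * n + 2))} (he : e ∈ symmetrize n a T') :
    e = chordAt a 0 (n + 1) ∨
      (∃ i j, i + 2 ≤ j ∧ j ≤ n + 1 ∧ ¬(i = 0 ∧ j = n + 1) ∧ chordAt a i j ∈ T' ∧
        e = chordAt a i j) ∨
      (∃ i j, i + 2 ≤ j ∧ j ≤ n ∧ chordAt a i j ∈ T' ∧
        e = chordAt a (i + (n + 1)) (j + (n + 1))) ∨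
      (∃ i, 1 ≤ i ∧ i + 1 ≤ n ∧ chordAt a i (n + 1) ∈ T' ∧ e = chordAt a 0 (i + (n + 1))) := by
  simp only [symmetrize, Finset.mem_insert, Finset.mem_union, Finset.mem_image] at he
  rcases he with rfl | he | ⟨f, hf, rfl⟩
  · exact Or.inl rfl
  · obtain ⟨i, j, hij, hj, hcl, rfl⟩ := hT'.1 _ he
    exact Or.inr (Or.inl ⟨i, j, hij, hj, hcl, he, rfl⟩)
  · obtain ⟨i, j, hij, hj, hcl, rfl⟩ := hT'.1 _ hf
    rcases (show j ≤ n ∨ j = n + 1 by omega) with hjn | rfl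
    · exact Or.inr (Or.inr (Or.inl ⟨i, j, hij, hjn, hf, map_rotate_chordAt a i j⟩))
    · refine Or.inr (Or.inr (Or.inr ⟨i, by omega, by omega, hf, ?_⟩))
      rw [map_rotate_chordAt_of_le_right _ le_rfl, Nat.sub_self]

theorem exists_mem_symmetrize_crosses (hT' : IsArcTriangulation a (n + 1) T')
    {e : Sym2 (ZMod (2 * n + 2))} (he : IsDiagonal (2 * n + 2) e)
    (hnot : e ∉ symmetrize n a T') : ∃ f ∈ symmetrize n a T', Crosses (2 * n + 2) e f := by
  have memD : chordAt a 0 (n + 1) ∈ symmetrize n a T' := Finset.mem_insert_self _ _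
  have mem {e} (he : e ∈ T') : e ∈ symmetrize n a T' :=
    Finset.mem_insert_of_mem (Finset.mem_union_left _ he)
  have memσ {e} (he : e ∈ T') : σ e ∈ symmetrize n a T' :=
    Finset.mem_insert_of_mem (Finset.mem_union_right _ (Finset.mem_image_of_mem _ he))
  obtain ⟨u, v, huv, hv, hvu, rfl⟩ := exists_chordAt_of_isDiagonal a he
  by_cases hvn : v ≤ n + 1
  · have hcl : ¬(u = 0 ∧ v = n + 1) := by
      rintro ⟨rfl, rfl⟩
      exact hnot memD
    obtain ⟨f, hf, hcr⟩ := hT'.2.2 _ ⟨u, v, huv, hvn, hcl, rfl⟩ (hnot ∘ mem)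
    exact ⟨f, mem hf, hcr⟩
  by_cases hu : u = 0 ∨ n + 1 ≤ u
  · have hσ : IsArcChord a (n + 1) (σ (chordAt a u v)) := by
      rcases hu with rfl | hu
      · rw [map_rotate_chordAt_of_le_right _ (by omega),
          isArcChord_chordAt_iff (by omega) (by omega) (by omega)]
        omega
      · rw [map_rotate_chordAt_of_le hu (by omega),
          isArcChord_chordAt_iff (by omega) (by omega) (by omega)]
        omega
    obtain ⟨f, hf, hcr⟩ := hT'.2.2 _ hσ fun h => hnot (map_rotate_rotate (chordAt a u v) ▸ memσ h)
    refine ⟨σ f, memσ hf, ?_⟩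
    have := Crosses.map_add ((n : ZMod (2 * n + 2)) + 1) hcr
    rwa [map_rotate_rotate] at this
  · refine ⟨_, memD, ?_⟩
    rw [crosses_chordAt_iff a (by omega) (by omega) (by omega) (by omega)]
    omega

theorem isTriangulation_symmetrize (hn : 1 ≤ n) (hT' : IsArcTriangulation a (n + 1) T') :
    IsTriangulation (2 * n + 2) (symmetrize n a T') := by
  refine ⟨fun e he => ?_, fun e he f hf => ?_,
    fun e he hnot => exists_mem_symmetrize_crosses hT' he hnot⟩
  · rcases exists_chordAt_of_mem_symmetrize hT' he with
      rfl | ⟨i, j, hij, hj, -, -, rfl⟩ | ⟨i, j, hij, hj, -, rfl⟩ | ⟨i, hi, hin, -, rfl⟩ <;>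
    · rw [isDiagonal_chordAt_iff a (by omega) (by omega)]
      omega
  · rcases exists_chordAt_of_mem_symmetrize hT' he with
      rfl | ⟨i, j, hij, hj, -, he', rfl⟩ | ⟨i, j, hij, hj, he', rfl⟩ | ⟨i, hi, hin, he', rfl⟩ <;>
    rcases exists_chordAt_of_mem_symmetrize hT' hf with
      rfl | ⟨u, v, huv, hv, -, hf', rfl⟩ | ⟨u, v, huv, hv, hf', rfl⟩ | ⟨u, hu, hun, hf', rfl⟩ <;>
    first
    | exact hT'.2.1 _ he' _ hf'
    | (rw [crosses_chordAt_iff a (by omega) (by omega) (by omega) (by omega)]; omega)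
    | (rw [crosses_chordAt_iff a (by omega) (by omega) (by omega) (by omega)]
       intro hcross
       refine hT'.2.1 _ he' _ hf' ?_
       rw [crosses_chordAt_iff a (by omega) (by omega) (by omega) (by omega)]
       omega)

theorem csTriangulation_symmetrize (hn : 1 ≤ n) (hT' : IsArcTriangulation a (n + 1) T') :
    CSTriangulation n (symmetrize n a T') := by
  refine ⟨isTriangulation_symmetrize hn hT', fun e he => ?_⟩
  simp only [symmetrize, Finset.mem_insert, Finset.mem_union, Finset.mem_image] at he ⊢
  rcases he with rfl | he | ⟨f, hf, rfl⟩
  · left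
    rw [map_rotate_chordAt_of_le_right _ le_rfl, Nat.sub_self, zero_add]
  · exact Or.inr (Or.inr ⟨e, he, rfl⟩)
  · exact Or.inr (Or.inl (by rwa [map_rotate_rotate]))

theorem filter_symmetrize (hT' : IsArcTriangulation a (n + 1) T') :
    (symmetrize n a T').filter (IsArcChord a (n + 1)) = T' := by
  ext e
  refine ⟨fun he => ?_, fun he => Finset.mem_filter.2
    ⟨Finset.mem_insert_of_mem (Finset.mem_union_left _ he), hT'.1 e he⟩⟩
  obtain ⟨he, hch⟩ := Finset.mem_filter.1 he
  rcases exists_chordAt_of_mem_symmetrize hT' he with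
    rfl | ⟨i, j, -, -, -, he', rfl⟩ | ⟨i, j, hij, hj, -, rfl⟩ | ⟨i, hi, hin, -, rfl⟩
  · rw [isArcChord_chordAt_iff (by omega) (by omega) (by omega)] at hch
    omega
  · exact he'
  · rw [isArcChord_chordAt_iff (by omega) (by omega) (by omega)] at hch
    omega
  · rw [isArcChord_chordAt_iff (by omega) (by omega) (by omega)] at hch
    omega

theorem card_csTriangulation_centralDiag_mem (hn : 1 ≤ n) (a : ZMod (2 * n + 2)) :
    Nat.card {T // CSTriangulation n T ∧ centralDiag n a ∈ T} = catalan n := by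
  let e : {T // CSTriangulation n T ∧ centralDiag n a ∈ T} ≃
      {T' // IsArcTriangulation a (n + 1) T'} :=
    { toFun := fun T => ⟨_, CSTriangulation.restrict_half T.2.1 T.2.2⟩
      invFun := fun T' => ⟨symmetrize n a T', csTriangulation_symmetrize hn T'.2,
        by rw [centralDiag_eq_chordAt]; exact Finset.mem_insert_self _ _⟩
      left_inv := fun T => Subtype.ext (CSTriangulation.eq_symmetrize T.2.1 T.2.2).symm
      right_inv := fun T' => Subtype.ext (filter_symmetrize T'.2) }
  rw [Nat.card_congr e, card_isArcTriangulation (by omega) (by omega)]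
  rfl

end CentralSymmetry

/-- The flip-graph edges `E(D, D')` for `D = centralDiag n a` and `D' = centralDiag n (a + t)`. -/
def IsCentralFlip (n : ℕ) (a : ZMod (2 * n + 2)) (t : ℕ)
    (T₁ T₂ : Finset (Sym2 (ZMod (2 * n + 2)))) : Prop :=
  CSTriangulation n T₁ ∧ CSTriangulation n T₂ ∧
    centralDiag n a ∈ T₁ ∧ centralDiag n (a + (t : ZMod (2 * n + 2))) ∈ T₂ ∧
    T₁ ≠ T₂ ∧ (T₁ \ T₂).card ≤ 2 ∧ (T₂ \ T₁).card ≤ 2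

theorem eq_insert_erase_of_sdiff_eq_singleton {α : Type*} [DecidableEq α] {s t : Finset α}
    {x y : α} (h₁ : s \ t = {x}) (h₂ : t \ s = {y}) : t = insert y (s.erase x) := by
  ext e
  have h₁e := Finset.ext_iff.1 h₁ e
  have h₂e := Finset.ext_iff.1 h₂ e
  simp only [Finset.mem_sdiff, Finset.mem_singleton, Finset.mem_insert, Finset.mem_erase]
    at h₁e h₂e ⊢
  tauto

section Flips

open scoped Classical

variable {n : ℕ} {a : ZMod (2 * n + 2)} {t : ℕ} {T T₁ T₂ : Finset (Sym2 (ZMod (2 * n + 2)))}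

local notation "σ" => Sym2.map (· + ((n : ZMod (2 * n + 2)) + 1))

theorem IsTriangulation.eq_of_map_rotate_eq_self (hT : IsTriangulation (2 * n + 2) T) {s : ℕ}
    (hs : s ≤ n) (hDs : chordAt a s (s + (n + 1)) ∈ T) {e : Sym2 (ZMod (2 * n + 2))}
    (he : e ∈ T) (hσ : σ e = e) : e = chordAt a s (s + (n + 1)) := by
  obtain ⟨u, v, huv, hv, hvu, rfl⟩ := exists_chordAt_of_isDiagonal a (hT.1 e he)
  rcases (show v < n + 1 ∨ n + 1 ≤ u ∨ (u < n + 1 ∧ n + 1 ≤ v) by omega) with h | h | ⟨hu, h⟩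
  · rw [map_rotate_chordAt, chordAt_eq_chordAt_iff a (by omega) (by omega) (by omega) hv] at hσ
    omega
  · rw [map_rotate_chordAt_of_le h (by omega),
      chordAt_eq_chordAt_iff a (by omega) (by omega) (by omega) hv] at hσ
    omega
  · rw [map_rotate_chordAt_of_le_right _ h,
      chordAt_eq_chordAt_iff a (by omega) (by omega) (by omega) hv] at hσ
    have hnc := hT.2.1 _ hDs _ he
    rw [crosses_chordAt_iff a (by omega) (by omega) (by omega) hv] at hnc
    obtain rfl : u = s := by omega
    congr 1
    omega

/-- `S \ S'` is stable under the half-turn, whose only fixed chord in `S` is the central diagonal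
at `a + s`; any other element would bring along a distinct partner. -/
theorem sdiff_eq_singleton_centralDiag {S S' : Finset (Sym2 (ZMod (2 * n + 2)))}
    (hS : CSTriangulation n S) (hS' : CSTriangulation n S') {s : ℕ} (hs : s ≤ n)
    (hsS : chordAt a s (s + (n + 1)) ∈ S) (hsS' : chordAt a s (s + (n + 1)) ∉ S')
    (hcard : (S \ S').card ≤ 2) : S \ S' = {chordAt a s (s + (n + 1))} := by
  set D := chordAt a s (s + (n + 1))
  have hσD : σ D = D := by
    rw [map_rotate_chordAt_of_le_right _ (by omega), Nat.add_sub_cancel]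
  refine Finset.eq_singleton_iff_unique_mem.2 ⟨Finset.mem_sdiff.2 ⟨hsS, hsS'⟩, fun e he => ?_⟩
  by_contra hne
  obtain ⟨heS, heS'⟩ := Finset.mem_sdiff.1 he
  have hσe : σ e ∈ S \ S' :=
    Finset.mem_sdiff.2 ⟨hS.2 _ heS, fun h => heS' (map_rotate_rotate e ▸ hS'.2 _ h)⟩
  have hσe_ne : σ e ≠ e := fun h => hne (IsTriangulation.eq_of_map_rotate_eq_self hS.1 hs hsS heS h)
  have hσe_ne_D : σ e ≠ D := fun h => hne (by rw [← map_rotate_rotate e, h, hσD])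
  have hsub : {D, e, σ e} ⊆ S \ S' := by
    simp only [Finset.insert_subset_iff, Finset.singleton_subset_iff]
    exact ⟨Finset.mem_sdiff.2 ⟨hsS, hsS'⟩, he, hσe⟩
  have h3 : ({D, e, σ e} : Finset _).card = 3 := by
    rw [Finset.card_insert_of_notMem, Finset.card_pair hσe_ne.symm]
    simp only [Finset.mem_insert, Finset.mem_singleton, not_or]
    exact ⟨Ne.symm hne, hσe_ne_D.symm⟩
  have := Finset.card_le_card hsub
  omega

namespace IsCentralFlip

variable (h : IsCentralFlip n a t T₁ T₂) (ht1 : 1 ≤ t) (htn : t ≤ n)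
include h ht1 htn

theorem sdiff_left : T₁ \ T₂ = {chordAt a 0 (n + 1)} := by
  have hD := centralDiag_eq_chordAt n a ▸ h.2.2.1
  have hD' := centralDiag_add_natCast n a t ▸ h.2.2.2.1
  have hD₀ : chordAt a 0 (0 + (n + 1)) ∈ T₁ := by rwa [zero_add]
  have := sdiff_eq_singleton_centralDiag h.1 h.2.1 (Nat.zero_le _) hD₀
    (fun hD₂ => h.2.1.1.2.1 _ hD' _ hD₂ ?_) h.2.2.2.2.2.1
  · rwa [zero_add] at this
  rw [crosses_chordAt_iff a (by omega) (by omega) (by omega) (by omega)]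
  omega

theorem sdiff_right : T₂ \ T₁ = {chordAt a t (t + (n + 1))} := by
  have hD := centralDiag_eq_chordAt n a ▸ h.2.2.1
  have hD' := centralDiag_add_natCast n a t ▸ h.2.2.2.1
  refine sdiff_eq_singleton_centralDiag h.2.1 h.1 htn hD'
    (fun hD'₁ => h.1.1.2.1 _ hD _ hD'₁ ?_) h.2.2.2.2.2.2
  rw [crosses_chordAt_iff a (by omega) (by omega) (by omega) (by omega)]
  omega

theorem eq_insert_erase :
    T₂ = insert (chordAt a t (t + (n + 1))) (T₁.erase (chordAt a 0 (n + 1))) :=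
  eq_insert_erase_of_sdiff_eq_singleton (h.sdiff_left ht1 htn) (h.sdiff_right ht1 htn)

/-- A chord of `T₁` crossing `c` is not `D`, so it survives the flip into `T₂`. -/
theorem mem_of_forall_crosses {c : Sym2 (ZMod (2 * n + 2))} (hc : IsDiagonal (2 * n + 2) c)
    (hcD : ¬ Crosses (2 * n + 2) c (chordAt a 0 (n + 1)))
    (hcross : ∀ f ∈ T₁, Crosses (2 * n + 2) c f →
      Crosses (2 * n + 2) (chordAt a 0 (n + 1)) f ∨
        Crosses (2 * n + 2) (chordAt a t (t + (n + 1))) f) : c ∈ T₁ := by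
  by_contra hc₁
  obtain ⟨f, hf, hcf⟩ := h.1.1.2.2 c hc hc₁
  have hf₂ : f ∈ T₂ := by
    by_contra hf₂
    have hfD := Finset.mem_sdiff.2 ⟨hf, hf₂⟩
    rw [h.sdiff_left ht1 htn, Finset.mem_singleton] at hfD
    exact hcD (hfD ▸ hcf)
  rcases hcross f hf hcf with hDf | hD'f
  · exact h.1.1.2.1 _ (centralDiag_eq_chordAt n a ▸ h.2.2.1) _ hf hDf
  · exact h.2.1.1.2.1 _ (centralDiag_add_natCast n a t ▸ h.2.2.2.1) _ hf₂ hD'f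

theorem isApex : IsApex a (n + 1) (T₁.filter (IsArcChord a (n + 1))) t := by
  have key {i j : ℕ} (hij : i + 2 ≤ j) (hj : j ≤ n + 1) (hcl : ¬(i = 0 ∧ j = n + 1))
      (hcross : ∀ u v, u + 2 ≤ v → v < 2 * n + 2 →
        (i < u ∧ u < j ∧ j < v) ∨ (u < i ∧ i < v ∧ v < j) →
        (0 < u ∧ u < n + 1 ∧ n + 1 < v) ∨ (u < t ∧ t < v ∧ v < t + (n + 1)) ∨
          (t < u ∧ u < t + (n + 1) ∧ t + (n + 1) < v)) :
      chordAt a i j ∈ T₁.filter (IsArcChord a (n + 1)) := by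
    refine Finset.mem_filter.2 ⟨h.mem_of_forall_crosses ht1 htn ?_ ?_ fun f hf hcf => ?_,
      i, j, hij, hj, hcl, rfl⟩
    · rw [isDiagonal_chordAt_iff a (by omega) (by omega)]
      omega
    · rw [crosses_chordAt_iff a (by omega) (by omega) (by omega) (by omega)]
      omega
    · obtain ⟨u, v, huv, hv, -, rfl⟩ := exists_chordAt_of_isDiagonal a (h.1.1.1 f hf)
      rw [crosses_chordAt_iff a (by omega) (by omega) (by omega) hv] at hcf
      rw [crosses_chordAt_iff a (by omega) (by omega) (by omega) hv,
        crosses_chordAt_iff a (by omega) (by omega) (by omega) hv]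
      have := hcross u v huv hv hcf
      omega
  refine ⟨ht1, by omega, ?_, ?_⟩
  · rcases (show t = 1 ∨ 2 ≤ t by omega) with ht | ht
    · exact Or.inl ht
    · exact Or.inr (key ht (by omega) (by omega) fun u v _ _ _ => by omega)
  · rcases (show t = n ∨ t + 1 ≤ n by omega) with ht | ht
    · exact Or.inl (by omega)
    · exact Or.inr (key (by omega) le_rfl (by omega) fun u v _ _ _ => by omega)

theorem restrict_left : IsArcTriangulation a t
    ((T₁.filter (IsArcChord a (n + 1))).filter (IsArcChord a t)) :=
  (CSTriangulation.restrict_half h.1 h.2.2.1).restrict_left (h.isApex ht1 htn) (by omega)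

theorem restrict_right : IsArcTriangulation (a + (t : ZMod (2 * n + 2))) (n + 1 - t)
    ((T₁.filter (IsArcChord a (n + 1))).filter
      (IsArcChord (a + (t : ZMod (2 * n + 2))) (n + 1 - t))) :=
  (CSTriangulation.restrict_half h.1 h.2.2.1).restrict_right (h.isApex ht1 htn) (by omega)

theorem eq_symmetrize_glue : T₁ = symmetrize n a (glue a (n + 1) t
    ((T₁.filter (IsArcChord a (n + 1))).filter (IsArcChord a t))
    ((T₁.filter (IsArcChord a (n + 1))).filter
      (IsArcChord (a + (t : ZMod (2 * n + 2))) (n + 1 - t)))) := by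
  rw [← (CSTriangulation.restrict_half h.1 h.2.2.1).eq_glue (h.isApex ht1 htn) (by omega)]
  exact CSTriangulation.eq_symmetrize h.1 h.2.2.1

end IsCentralFlip

theorem card_isCentralFlip_le (a : ZMod (2 * n + 2)) (ht1 : 1 ≤ t) (htn : t ≤ n) :
    Nat.card {p : Finset (Sym2 (ZMod (2 * n + 2))) × Finset (Sym2 (ZMod (2 * n + 2))) //
      IsCentralFlip n a t p.1 p.2} ≤ catalan (t - 1) * catalan (n - t) := by
  let H : {p : Finset (Sym2 (ZMod (2 * n + 2))) × Finset (Sym2 (ZMod (2 * n + 2))) //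
        IsCentralFlip n a t p.1 p.2} →
      {T // IsArcTriangulation a t T} ×
        {T // IsArcTriangulation (a + (t : ZMod (2 * n + 2))) (n + 1 - t) T} := fun p =>
    (⟨_, p.2.restrict_left ht1 htn⟩, ⟨_, p.2.restrict_right ht1 htn⟩)
  have hH : Function.Injective H := by
    rintro ⟨⟨T₁, T₂⟩, (h : IsCentralFlip n a t T₁ T₂)⟩
      ⟨⟨T₁', T₂'⟩, (h' : IsCentralFlip n a t T₁' T₂')⟩ hHeq
    simp only [H, Prod.mk.injEq, Subtype.mk.injEq] at hHeq
    have h₁ : T₁ = T₁' := by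
      rw [h.eq_symmetrize_glue ht1 htn, h'.eq_symmetrize_glue ht1 htn, hHeq.1, hHeq.2]
    obtain rfl := h₁
    obtain rfl : T₂ = T₂' := by
      rw [h.eq_insert_erase ht1 htn, h'.eq_insert_erase ht1 htn]
    rfl
  calc Nat.card _ ≤ Nat.card ({T // IsArcTriangulation a t T} ×
        {T // IsArcTriangulation (a + (t : ZMod (2 * n + 2))) (n + 1 - t) T}) :=
        Nat.card_le_card_of_injective H hH
    _ = catalan (t - 1) * catalan (n - t) := by
        rw [Nat.card_prod, card_isArcTriangulation ht1 (by omega),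
          card_isArcTriangulation (by omega) (by omega), show n + 1 - t - 1 = n - t by omega]

end Flips

end TypeB

namespace Nat

theorem succ_mul_centralBinom_sq_le_sixteen_pow (k : ℕ) :
    (k + 1) * centralBinom k ^ 2 ≤ 16 ^ k := by
  induction k with
  | zero => simp
  | succ k ih =>
    have hpoly : (2 * k + 1) ^ 2 * (k + 2) ≤ 4 * (k + 1) ^ 3 := by ring_nf; omega
    refine Nat.le_of_mul_le_mul_left ?_ (by positivity : 0 < (k + 1) ^ 2)
    calc (k + 1) ^ 2 * ((k + 1 + 1) * centralBinom (k + 1) ^ 2)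
        = (k + 2) * ((k + 1) * centralBinom (k + 1)) ^ 2 := by ring
      _ = 4 * ((2 * k + 1) ^ 2 * (k + 2)) * centralBinom k ^ 2 := by
          rw [succ_mul_centralBinom_succ]; ring
      _ ≤ 4 * (4 * (k + 1) ^ 3) * centralBinom k ^ 2 := by gcongr
      _ = 16 * (k + 1) ^ 2 * ((k + 1) * centralBinom k ^ 2) := by ring
      _ ≤ 16 * (k + 1) ^ 2 * 16 ^ k := by gcongr
      _ = (k + 1) ^ 2 * 16 ^ (k + 1) := by ring

theorem sixteen_pow_le_four_mul_mul_centralBinom_sq {k : ℕ} (hk : 1 ≤ k) :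
    16 ^ k ≤ 4 * k * centralBinom k ^ 2 := by
  induction k, hk using Nat.le_induction with
  | base => simp [centralBinom, choose]
  | succ k hk ih =>
    have hpoly : 4 * k * (k + 1) ≤ (2 * k + 1) ^ 2 := by ring_nf; omega
    refine Nat.le_of_mul_le_mul_left ?_ (by positivity : 0 < (k + 1) ^ 2)
    calc (k + 1) ^ 2 * 16 ^ (k + 1) = 16 * (k + 1) ^ 2 * 16 ^ k := by ring
      _ ≤ 16 * (k + 1) ^ 2 * (4 * k * centralBinom k ^ 2) := by gcongr
      _ = 16 * (k + 1) * (4 * k * (k + 1)) * centralBinom k ^ 2 := by ring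
      _ ≤ 16 * (k + 1) * (2 * k + 1) ^ 2 * centralBinom k ^ 2 := by gcongr
      _ = 4 * (k + 1) * ((k + 1) * centralBinom (k + 1)) ^ 2 := by
          rw [succ_mul_centralBinom_succ]; ring
      _ = (k + 1) ^ 2 * (4 * (k + 1) * centralBinom (k + 1) ^ 2) := by ring

theorem catalan_pos (k : ℕ) : 0 < catalan k :=
  Nat.pos_of_mul_pos_left ((succ_mul_catalan_eq_centralBinom k).symm ▸ centralBinom_pos k)

theorem succ_pow_three_mul_catalan_sq (k : ℕ) :
    (k + 1) ^ 3 * catalan k ^ 2 = (k + 1) * centralBinom k ^ 2 := by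
  rw [← succ_mul_catalan_eq_centralBinom]; ring

theorem sixteen_pow_le_four_mul_succ_pow_three_mul_catalan_sq (k : ℕ) :
    16 ^ k ≤ 4 * ((k + 1) ^ 3 * catalan k ^ 2) := by
  rw [succ_pow_three_mul_catalan_sq]
  rcases k.eq_zero_or_pos with rfl | hk
  · simp
  · calc 16 ^ k ≤ 4 * k * centralBinom k ^ 2 := sixteen_pow_le_four_mul_mul_centralBinom_sq hk
      _ ≤ 4 * ((k + 1) * centralBinom k ^ 2) := by rw [← mul_assoc]; gcongr; omega

/-- Squared form of `C_u C_v (min u v + 1) ^ (3 / 2) ≤ 2 C_(u+v+1)`. -/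
theorem catalan_mul_catalan_sq_mul_min_cube_le (u v : ℕ) :
    (catalan u * catalan v) ^ 2 * (min u v + 1) ^ 3 ≤ 4 * catalan (u + v + 1) ^ 2 := by
  have hmin : (min u v + 1) * (u + v + 2) ≤ 2 * ((u + 1) * (v + 1)) := by
    rcases le_total u v with h | h
    · rw [min_eq_left h]; nlinarith
    · rw [min_eq_right h]; nlinarith
  have hcat (k : ℕ) : (k + 1) ^ 3 * catalan k ^ 2 ≤ 16 ^ k := by
    rw [succ_pow_three_mul_catalan_sq]; exact succ_mul_centralBinom_sq_le_sixteen_pow k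
  refine Nat.le_of_mul_le_mul_right (c := ((u + 1) * (v + 1) * (u + v + 2)) ^ 3) ?_
    (by positivity : 0 < ((u + 1) * (v + 1) * (u + v + 2)) ^ 3)
  calc (catalan u * catalan v) ^ 2 * (min u v + 1) ^ 3 * ((u + 1) * (v + 1) * (u + v + 2)) ^ 3
      = ((u + 1) ^ 3 * catalan u ^ 2) * ((v + 1) ^ 3 * catalan v ^ 2) *
          ((min u v + 1) * (u + v + 2)) ^ 3 := by ring
    _ ≤ 16 ^ u * 16 ^ v * (2 * ((u + 1) * (v + 1))) ^ 3 := by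
        gcongr
        exacts [hcat u, hcat v]
    _ = 8 * 16 ^ (u + v) * ((u + 1) * (v + 1)) ^ 3 := by ring
    _ ≤ 16 ^ (u + v + 1) * ((u + 1) * (v + 1)) ^ 3 := by
        gcongr ?_ * _; rw [pow_succ]; omega
    _ ≤ 4 * ((u + v + 1 + 1) ^ 3 * catalan (u + v + 1) ^ 2) * ((u + 1) * (v + 1)) ^ 3 := by
        gcongr; exact sixteen_pow_le_four_mul_succ_pow_three_mul_catalan_sq _
    _ = 4 * catalan (u + v + 1) ^ 2 * ((u + 1) * (v + 1) * (u + v + 2)) ^ 3 := by ring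

end Nat

theorem div_le_two_div_rpow_of_sq_mul_pow_three_le {x y d : ℕ} (hy : 0 < y) (hd : 0 < d)
    (h : x ^ 2 * d ^ 3 ≤ 4 * y ^ 2) : (x : ℝ) / y ≤ 2 / (d : ℝ) ^ ((3 : ℝ) / 2) := by
  have hsq : ((d : ℝ) ^ ((3 : ℝ) / 2)) ^ 2 = (d : ℝ) ^ 3 := by
    rw [← Real.rpow_natCast, ← Real.rpow_mul (by positivity)]
    norm_num
  rw [div_le_div_iff₀ (by positivity) (by positivity), ← pow_le_pow_iff_left₀ (by positivity)
    (by positivity) two_ne_zero, mul_pow, mul_pow, hsq]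
  exact_mod_cast h

/-- `D = centralDiag n a`, `D' = centralDiag n (a + t)` and `d(D, D') = min t (n + 1 - t)`. -/
theorem typeB_boundary_ratio_upper :
    ∃ c : ℝ, 0 < c ∧ ∃ N : ℕ, ∀ n ≥ N, ∀ a : ZMod (2 * n + 2), ∀ t : ℕ, 1 ≤ t → t ≤ n →
      (Nat.card {p : Finset (Sym2 (ZMod (2 * n + 2))) × Finset (Sym2 (ZMod (2 * n + 2))) //
          CSTriangulation n p.1 ∧ CSTriangulation n p.2 ∧
          centralDiag n a ∈ p.1 ∧ centralDiag n (a + (t : ZMod (2 * n + 2))) ∈ p.2 ∧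
          p.1 ≠ p.2 ∧ (p.1 \ p.2).card ≤ 2 ∧ (p.2 \ p.1).card ≤ 2} : ℝ) /
        (Nat.card {T : Finset (Sym2 (ZMod (2 * n + 2))) //
          CSTriangulation n T ∧ centralDiag n a ∈ T} : ℝ) ≤
      c / ((min t (n + 1 - t) : ℕ) : ℝ) ^ ((3 : ℝ) / 2) := by
  refine ⟨2, two_pos, 1, fun n hn a t ht1 htn => ?_⟩
  have hcat := Nat.catalan_mul_catalan_sq_mul_min_cube_le (t - 1) (n - t)
  rw [show t - 1 + (n - t) + 1 = n by omega,
    show min (t - 1) (n - t) + 1 = min t (n + 1 - t) by omega] at hcat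
  rw [TypeB.card_csTriangulation_centralDiag_mem hn a]
  calc _ ≤ ((catalan (t - 1) * catalan (n - t) : ℕ) : ℝ) / catalan n := by
        gcongr
        exact TypeB.card_isCentralFlip_le a ht1 htn
    _ ≤ _ := div_le_two_div_rpow_of_sq_mul_pow_three_le (Nat.catalan_pos n) (by omega) hcat
end

section
/- Let n >= 1 and consider the type-B associahedron graph b_n on centrally symmetric triangulations of the regular (2n+2)-gon. Then b_n is a regular graph of degree n, and its vertex classes Psi(D_1), ..., Psi(D_{n+1}) indexed by the n+1 central diagonals partition the vertex set, with each vertex of Psi(D) having at most one neighbor outside Psi(D). -/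
open scoped BigOperators

/-- The 1-skeleton of the type-B associahedron `\U0001d51f\u2099`: vertices are the centrally
symmetric triangulations of the regular `(2n+2)`-gon, and two triangulations are adjacent
iff they differ in a single flip (of the central diagonal, or of a centrally symmetric pair
of diagonals), i.e. iff they differ in at most one centrally symmetric orbit of diagonals. -/
def typeBGraph (n : ℕ) :
    SimpleGraph {T : Finset (Sym2 (ZMod (2 * n + 2))) // CSTriangulation n T} where
  Adj T T' := T ≠ T' ∧ (T.val \ T'.val).card ≤ 2 ∧ (T'.val \ T.val).card ≤ 2
  symm := ⟨fun _ _ h => ⟨Ne.symm h.1, h.2.2, h.2.1⟩⟩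
  loopless := ⟨fun _ h => h.1 rfl⟩

/-!
A centrally symmetric triangulation of the `(2n+2)`-gon has `2n - 1` diagonals, an odd number,
so the half-turn fixes one of them; the fixed diagonals are exactly the central ones, and two
distinct central diagonals cross, so there is exactly one. The other diagonals pair up, giving
`n` half-turn orbits. Two adjacent vertices of the graph differ in exactly one orbit, and every
orbit can be flipped in exactly one way: inside the quadrilateral formed by the two triangles on
a diagonal `ab` of the orbit, `ab` is replaced by the other diagonal `cd`, and the image of `ab`
by the image of `cd`. Hence neighbours correspond to orbits and the degree is `n`; a neighbour
losing the central diagonal `D` is the flip of the orbit `{D}`, so there is at most one.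
-/

namespace TypeBAssociahedron

section CyclicOrder

variable {M : ℕ}

lemma sym2_exists_eq_mk {α : Type*} (z : Sym2 α) : ∃ x y, z = s(x, y) :=
  Sym2.ind (fun x y => ⟨x, y, rfl⟩) z

/-- Cyclic-order facts are proved by measuring every vertex clockwise from one base point `a`
and calling `omega`. -/
def cwDist (a b : ZMod M) : ℕ := (b - a).val

lemma cwDist_eq_zero {a b : ZMod M} : cwDist a b = 0 ↔ a = b := by
  rw [cwDist, ZMod.val_eq_zero, sub_eq_zero, eq_comm]

@[simp] lemma cwDist_self (a : ZMod M) : cwDist a a = 0 := cwDist_eq_zero.mpr rfl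

lemma crossPairs_swap_left {a b c d : ZMod M} : crossPairs M a b c d ↔ crossPairs M b a c d := by
  unfold crossPairs; tauto

lemma crossPairs_swap_right {a b c d : ZMod M} : crossPairs M a b c d ↔ crossPairs M a b d c := by
  unfold crossPairs; tauto

lemma crosses_mk_iff {a b c d : ZMod M} : Crosses M s(a, b) s(c, d) ↔ crossPairs M a b c d := by
  refine ⟨?_, fun h => ⟨a, b, c, d, rfl, rfl, h⟩⟩
  rintro ⟨a', b', c', d', he, hf, h⟩
  rw [Sym2.eq_iff] at he hf
  rcases he with ⟨rfl, rfl⟩ | ⟨rfl, rfl⟩ <;> rcases hf with ⟨rfl, rfl⟩ | ⟨rfl, rfl⟩ <;>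
    simp only [crossPairs] at h ⊢ <;> tauto

variable [NeZero M]

lemma cwDist_lt (a b : ZMod M) : cwDist a b < M := ZMod.val_lt _

lemma eq_of_cwDist_eq {a x y : ZMod M} (h : cwDist a x = cwDist a y) : x = y :=
  sub_left_injective (ZMod.val_injective M h)

lemma val_sub_eq_or (u v : ZMod M) :
    (v.val ≤ u.val ∧ (u - v).val = u.val - v.val) ∨
    (u.val < v.val ∧ (u - v).val = u.val + M - v.val) := by
  rcases le_or_gt v.val u.val with h | h
  · exact Or.inl ⟨h, ZMod.val_sub h⟩
  · refine Or.inr ⟨h, ?_⟩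
    have hv : v ≠ 0 := by rintro rfl; simp at h
    have : NeZero v := ⟨hv⟩
    have := ZMod.val_lt u
    have := ZMod.val_lt v
    rw [sub_eq_add_neg, ZMod.val_add, ZMod.val_neg_of_ne_zero, Nat.mod_eq_of_lt (by omega)]
    omega

lemma cwDist_trans_cases (a x y : ZMod M) :
    (cwDist a x ≤ cwDist a y ∧ cwDist x y = cwDist a y - cwDist a x) ∨
    (cwDist a y < cwDist a x ∧ cwDist x y = cwDist a y + M - cwDist a x) := by
  simpa only [cwDist, sub_sub_sub_cancel_right] using val_sub_eq_or (y - a) (x - a)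

lemma cwDist_add_cwDist {a b : ZMod M} (h : a ≠ b) : cwDist a b + cwDist b a = M := by
  have hba : cwDist a b ≠ 0 := fun h' => h (cwDist_eq_zero.mp h')
  have := cwDist_lt a b
  rcases cwDist_trans_cases a b a with h' | h' <;> simp only [cwDist_self] at h' <;> omega

lemma cwDist_eq_one {a b : ZMod M} (hM : 1 < M) : cwDist a b = 1 ↔ b = a + 1 := by
  have : Fact (1 < M) := ⟨hM⟩
  rw [cwDist, ← ZMod.val_one M, ZMod.val_injective M |>.eq_iff, sub_eq_iff_eq_add, add_comm]

def CycBetween (C X D : ℕ) : Prop := (C < X ∧ X < D) ∨ (X < D ∧ D < C) ∨ (D < C ∧ C < X)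

lemma arcMem_iff (a : ZMod M) {c d x : ZMod M} :
    arcMem M c d x ↔ CycBetween (cwDist a c) (cwDist a x) (cwDist a d) := by
  have h1 := cwDist_trans_cases a c x
  have h2 := cwDist_trans_cases a c d
  have := cwDist_lt a c
  have := cwDist_lt a d
  have := cwDist_lt a x
  change 0 < cwDist c x ∧ cwDist c x < cwDist c d ↔ _
  unfold CycBetween
  omega

lemma crossPairs_comm {a b c d : ZMod M} (h : crossPairs M a b c d) : crossPairs M c d a b := by
  simp only [crossPairs, arcMem_iff a, CycBetween, cwDist_self] at h ⊢
  omega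

lemma not_crossPairs_self (c d : ZMod M) : ¬ crossPairs M c d c d := by
  simp only [crossPairs, arcMem_iff c, CycBetween, cwDist_self]
  omega

lemma _root_.Crosses.symm {e f : Sym2 (ZMod M)} (h : Crosses M e f) : Crosses M f e := by
  obtain ⟨a, b, c, d, rfl, rfl, h⟩ := h
  exact ⟨c, d, a, b, rfl, rfl, crossPairs_comm h⟩

lemma not_crosses_self (e : Sym2 (ZMod M)) : ¬ Crosses M e e := by
  obtain ⟨a, b, rfl⟩ := sym2_exists_eq_mk e
  rw [crosses_mk_iff]
  exact not_crossPairs_self a b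

lemma isDiagonal_mk_iff {a b : ZMod M} (hM : 1 < M) :
    IsDiagonal M s(a, b) ↔ 2 ≤ cwDist a b ∧ 2 ≤ cwDist b a := by
  have key : ∀ {x y : ZMod M}, x ≠ y → y ≠ x + 1 → x ≠ y + 1 →
      2 ≤ cwDist x y ∧ 2 ≤ cwDist y x := fun {x y} h1 h2 h3 => by
    have := cwDist_add_cwDist h1
    have := cwDist_lt x y
    have := cwDist_lt y x
    have := mt (cwDist_eq_one hM).mp h2
    have := mt (cwDist_eq_one hM).mp h3
    have := mt cwDist_eq_zero.mp h1
    omega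
  constructor
  · rintro ⟨x, y, he, h1, h2, h3⟩
    rw [Sym2.eq_iff] at he
    rcases he with ⟨rfl, rfl⟩ | ⟨rfl, rfl⟩
    · exact key h1 h2 h3
    · exact (key h1 h2 h3).symm
  · rintro ⟨h1, h2⟩
    refine ⟨a, b, rfl, fun h => ?_, fun h => ?_, fun h => ?_⟩
    · subst h; simp at h1
    · rw [← cwDist_eq_one hM] at h; omega
    · rw [← cwDist_eq_one hM] at h; omega

lemma not_crossPairs_of_cwDist_eq_one {a b : ZMod M} (h : cwDist a b = 1) (c d : ZMod M) :
    ¬ crossPairs M a b c d := by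
  have := cwDist_lt a b
  simp only [crossPairs, arcMem_iff a, CycBetween, cwDist_self]
  omega

end CyclicOrder

section Triangulation

variable {M : ℕ} {T : Finset (Sym2 (ZMod M))}

def IsEdge (T : Finset (Sym2 (ZMod M))) (a b : ZMod M) : Prop :=
  s(a, b) ∈ T ∨ cwDist a b = 1 ∨ cwDist b a = 1

lemma IsEdge.symm {a b : ZMod M} (h : IsEdge T a b) : IsEdge T b a := by
  unfold IsEdge at h ⊢
  rw [Sym2.eq_swap]
  tauto

lemma IsEdge.mem_of_two_le {a b : ZMod M} (h : IsEdge T a b) (h2 : 2 ≤ cwDist a b)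
    (h2' : 2 ≤ cwDist b a) : s(a, b) ∈ T := by
  rcases h with h | h | h <;> first | exact h | omega

variable [NeZero M]

lemma _root_.IsTriangulation.not_crossPairs (hT : IsTriangulation M T) {a b c d : ZMod M}
    (h1 : IsEdge T a b) (h2 : IsEdge T c d) : ¬ crossPairs M a b c d := by
  have side_left {a b c d : ZMod M} (h : cwDist a b = 1 ∨ cwDist b a = 1) :
      ¬ crossPairs M a b c d := by
    rcases h with h | h
    · exact not_crossPairs_of_cwDist_eq_one h c d
    · exact crossPairs_swap_left.not.mpr (not_crossPairs_of_cwDist_eq_one h c d)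
  rcases h1 with h1 | h1
  · rcases h2 with h2 | h2
    · exact fun hc => hT.2.1 _ h1 _ h2 (crosses_mk_iff.mpr hc)
    · exact fun hc => side_left h2 (crossPairs_comm hc)
  · exact side_left h1

lemma _root_.IsTriangulation.two_le_cwDist (hT : IsTriangulation M T) {x y : ZMod M}
    (h : s(x, y) ∈ T) : 2 ≤ cwDist x y ∧ 2 ≤ cwDist y x := by
  obtain ⟨u, v, -, huv, -⟩ := hT.1 _ h
  have := mt cwDist_eq_zero.mp huv
  have := cwDist_lt u v
  exact (isDiagonal_mk_iff (by omega)).mp (hT.1 _ h)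

/-- Such a diagonal crosses neither `ab` nor `ac`, which leaves only `a` for its second
endpoint. -/
lemma _root_.IsTriangulation.eq_of_arcMem_of_arcMem (hT : IsTriangulation M T) {a b c u v : ZMod M}
    (hab : IsEdge T a b) (hac : IsEdge T a c) (hc : arcMem M a b c) (huv : s(u, v) ∈ T)
    (hu : arcMem M c b u) (hv : arcMem M b c v) : v = a := by
  rw [arcMem_iff a] at hc hu hv
  unfold CycBetween at hc hu hv
  simp only [cwDist_self] at hc
  have := cwDist_lt a b
  have := cwDist_lt a v
  refine (cwDist_eq_zero.mp ?_).symm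
  by_contra hv0
  rcases (by omega : cwDist a b < cwDist a v ∨ cwDist a v < cwDist a c) with h | h
  · refine hT.not_crossPairs hab (Or.inl huv) (Or.inl ⟨?_, ?_⟩) <;>
      rw [arcMem_iff a] <;> unfold CycBetween <;> simp only [cwDist_self] <;> omega
  · refine hT.not_crossPairs hac (Or.inl huv) (Or.inr ⟨?_, ?_⟩) <;>
      rw [arcMem_iff a] <;> unfold CycBetween <;> simp only [cwDist_self] <;> omega

/-- The apex over the edge `ab` is the farthest vertex of the arc `(a, b)` joined to `a`. -/
lemma _root_.IsTriangulation.exists_apex (hT : IsTriangulation M T) {a b : ZMod M}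
    (hab : IsEdge T a b) (h2 : 2 ≤ cwDist a b) :
    ∃ c, arcMem M a b c ∧ IsEdge T a c ∧ IsEdge T c b := by
  classical
  have hM : 1 < M := by have := cwDist_lt a b; omega
  set S := Finset.univ.filter (fun c => arcMem M a b c ∧ IsEdge T a c)
  have hS : a + 1 ∈ S := by
    have h1 : cwDist a (a + 1) = 1 := (cwDist_eq_one hM).mpr rfl
    simp only [S, Finset.mem_filter, Finset.mem_univ, true_and]
    exact ⟨(arcMem_iff a).mpr (by unfold CycBetween; simp only [cwDist_self]; omega),
      Or.inr (Or.inl h1)⟩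
  obtain ⟨c, hcS, hmax⟩ := S.exists_max_image (cwDist a) ⟨_, hS⟩
  simp only [S, Finset.mem_filter, Finset.mem_univ, true_and] at hcS
  obtain ⟨hc, hac⟩ := hcS
  refine ⟨c, hc, hac, ?_⟩
  have hcpos : 0 < cwDist a c ∧ cwDist a c < cwDist a b := hc
  have := cwDist_lt a b
  have hcb : cwDist c b = cwDist a b - cwDist a c := by
    have := cwDist_trans_cases a c b; omega
  by_cases hside : cwDist c b = 1
  · exact Or.inr (Or.inl hside)
  left
  by_contra hnotin
  have := cwDist_add_cwDist (a := c) (b := b) fun h => by subst h; omega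
  have hdiag : IsDiagonal M s(c, b) := (isDiagonal_mk_iff hM).mpr ⟨by omega, by omega⟩
  obtain ⟨f, hfT, hcross⟩ := hT.2.2 _ hdiag hnotin
  obtain ⟨x, y, rfl⟩ := sym2_exists_eq_mk f
  have beyond {u v : ZMod M} (huv : s(u, v) ∈ T) (hu : arcMem M c b u) (hv : arcMem M b c v) :
      False := by
    obtain rfl : a = v := (hT.eq_of_arcMem_of_arcMem hab hac hc huv hu hv).symm
    have hu' := (arcMem_iff a).mp hu
    unfold CycBetween at hu'
    have hmem : u ∈ S := by
      simp only [S, Finset.mem_filter, Finset.mem_univ, true_and]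
      refine ⟨(arcMem_iff a).mpr ?_, Or.inl (by rwa [Sym2.eq_swap])⟩
      unfold CycBetween; simp only [cwDist_self]; omega
    have := hmax u hmem
    omega
  rw [crosses_mk_iff] at hcross
  rcases hcross with ⟨hx, hy⟩ | ⟨hy, hx⟩
  · exact beyond hfT hx hy
  · exact beyond (by rwa [Sym2.eq_swap]) hy hx

lemma _root_.IsTriangulation.apex_unique (hT : IsTriangulation M T) {a b c c' : ZMod M}
    (hc : arcMem M a b c) (hac : IsEdge T a c) (hcb : IsEdge T c b)
    (hc' : arcMem M a b c') (hac' : IsEdge T a c') (hcb' : IsEdge T c' b) : c = c' := by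
  have cross {u v : ZMod M} (hu : arcMem M a b u) (hv : arcMem M a b v)
      (huv : cwDist a u < cwDist a v) : crossPairs M a v u b := by
    simp only [crossPairs, arcMem_iff a, CycBetween, cwDist_self] at hu hv ⊢
    omega
  rcases lt_trichotomy (cwDist a c) (cwDist a c') with h | h | h
  · exact absurd (cross hc hc' h) (hT.not_crossPairs hac' hcb)
  · exact eq_of_cwDist_eq h
  · exact absurd (cross hc' hc h) (hT.not_crossPairs hac hcb')

end Triangulation

section Counting

open scoped Classical Finset

variable {M : ℕ} [NeZero M] {T : Finset (Sym2 (ZMod M))}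

noncomputable def chordsIn (T : Finset (Sym2 (ZMod M))) (a b : ZMod M) :
    Finset (Sym2 (ZMod M)) :=
  T.filter (fun f => ∀ x ∈ f, cwDist a x ≤ cwDist a b)

lemma mem_chordsIn {a b x y : ZMod M} :
    s(x, y) ∈ chordsIn T a b ↔
      s(x, y) ∈ T ∧ cwDist a x ≤ cwDist a b ∧ cwDist a y ≤ cwDist a b := by
  simp [chordsIn]

lemma chordsIn_eq_empty (hT : IsTriangulation M T) {a b : ZMod M} (h : cwDist a b = 1) :
    chordsIn T a b = ∅ := by
  refine Finset.eq_empty_of_forall_notMem fun f hf => ?_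
  obtain ⟨x, y, rfl⟩ := sym2_exists_eq_mk f
  obtain ⟨hf, hx, hy⟩ := mem_chordsIn.mp hf
  have := cwDist_lt a b
  have := hT.two_le_cwDist hf
  have := cwDist_trans_cases a x y
  have := cwDist_trans_cases a y x
  omega

lemma eq_of_cwDist_lt_apex (hT : IsTriangulation M T) {a b c x y : ZMod M}
    (hac : IsEdge T a c) (hcb : IsEdge T c b)
    (hxy : s(x, y) ∈ T) (hx : cwDist a x < cwDist a c) (hy : cwDist a c < cwDist a y)
    (hyb : cwDist a y ≤ cwDist a b) : x = a ∧ y = b := by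
  have := cwDist_lt a b
  have := cwDist_lt a x
  have := cwDist_lt a y
  constructor
  · by_contra hxa
    have := mt cwDist_eq_zero.mp (Ne.symm hxa)
    refine hT.not_crossPairs hac (Or.inl hxy) (Or.inl ⟨?_, ?_⟩) <;>
      rw [arcMem_iff a] <;> unfold CycBetween <;> simp only [cwDist_self] <;> omega
  · by_contra hyb'
    have := mt (eq_of_cwDist_eq (a := a)) hyb'
    refine hT.not_crossPairs hcb (Or.inl hxy) (Or.inr ⟨?_, ?_⟩) <;>
      rw [arcMem_iff a] <;> unfold CycBetween <;> omega

lemma chordsIn_subset_union (hT : IsTriangulation M T) {a b c : ZMod M} (hc : arcMem M a b c)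
    (hac : IsEdge T a c) (hcb : IsEdge T c b) :
    chordsIn T a b ⊆ chordsIn T a c ∪ chordsIn T c b ∪ T.filter (· = s(a, b)) := by
  have hc' : 0 < cwDist a c ∧ cwDist a c < cwDist a b := hc
  have hca {x : ZMod M} : cwDist a c ≤ cwDist a x → cwDist c x = cwDist a x - cwDist a c := by
    have := cwDist_trans_cases a c x; omega
  have ordered {x y : ZMod M} (hxy : s(x, y) ∈ chordsIn T a b) (hle : cwDist a x ≤ cwDist a y) :
      s(x, y) ∈ chordsIn T a c ∪ chordsIn T c b ∪ T.filter (· = s(a, b)) := by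
    obtain ⟨hT', hx, hy⟩ := mem_chordsIn.mp hxy
    simp only [Finset.mem_union, Finset.mem_filter, mem_chordsIn]
    by_cases hyc : cwDist a y ≤ cwDist a c
    · exact Or.inl (Or.inl ⟨hT', by omega, hyc⟩)
    by_cases hxc : cwDist a c ≤ cwDist a x
    · have := hca hxc
      have := hca (x := y) (by omega)
      have := hca (x := b) hc'.2.le
      exact Or.inl (Or.inr ⟨hT', by omega, by omega⟩)
    obtain ⟨rfl, rfl⟩ := eq_of_cwDist_lt_apex hT hac hcb hT' (by omega) (by omega) hy
    exact Or.inr ⟨hT', rfl⟩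
  intro f hf
  obtain ⟨x, y, rfl⟩ := sym2_exists_eq_mk f
  rcases le_total (cwDist a x) (cwDist a y) with h | h
  · exact ordered hf h
  · have := ordered (x := y) (y := x) (by rwa [Sym2.eq_swap]) h
    rwa [show s(y, x) = s(x, y) from Sym2.eq_swap] at this

lemma union_subset_chordsIn {a b c : ZMod M} (hc : arcMem M a b c) :
    chordsIn T a c ∪ chordsIn T c b ∪ T.filter (· = s(a, b)) ⊆ chordsIn T a b := by
  have hc' : 0 < cwDist a c ∧ cwDist a c < cwDist a b := hc
  have hca {x : ZMod M} : cwDist c x ≤ cwDist c b → cwDist c x = cwDist a x - cwDist a c ∧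
      cwDist c b = cwDist a b - cwDist a c := by
    have := cwDist_trans_cases a c x; have := cwDist_trans_cases a c b; have := cwDist_lt a b
    omega
  intro f hf
  obtain ⟨x, y, rfl⟩ := sym2_exists_eq_mk f
  rcases Finset.mem_union.mp hf with hf | hf
  · rw [mem_chordsIn]
    rcases Finset.mem_union.mp hf with hf | hf <;> obtain ⟨h, hx, hy⟩ := mem_chordsIn.mp hf
    · exact ⟨h, by omega, by omega⟩
    · have := hca hx
      have := hca hy
      exact ⟨h, by omega, by omega⟩
  · obtain ⟨h, hab⟩ := Finset.mem_filter.mp hf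
    rw [hab, mem_chordsIn]
    exact ⟨hab ▸ h, by simp, le_rfl⟩

lemma disjoint_chordsIn (hT : IsTriangulation M T) {a b c : ZMod M} (hc : arcMem M a b c) :
    Disjoint (chordsIn T a c) (chordsIn T c b) := by
  have hc' : 0 < cwDist a c ∧ cwDist a c < cwDist a b := hc
  refine Finset.disjoint_left.mpr fun f hf1 hf2 => ?_
  obtain ⟨x, y, rfl⟩ := sym2_exists_eq_mk f
  obtain ⟨hf, hx, hy⟩ := mem_chordsIn.mp hf1
  obtain ⟨-, hx', hy'⟩ := mem_chordsIn.mp hf2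
  have := cwDist_trans_cases a c x
  have := cwDist_trans_cases a c y
  have := cwDist_trans_cases a c b
  have := cwDist_lt a b
  obtain rfl : x = c := eq_of_cwDist_eq (a := a) (by omega)
  obtain rfl : y = x := eq_of_cwDist_eq (a := a) (by omega)
  have := hT.two_le_cwDist hf
  simp at this

lemma disjoint_chordsIn_union_filter {a b c : ZMod M} (hc : arcMem M a b c) :
    Disjoint (chordsIn T a c ∪ chordsIn T c b) (T.filter (· = s(a, b))) := by
  have hc' : 0 < cwDist a c ∧ cwDist a c < cwDist a b := hc
  have hac : a ≠ c := fun h => by subst h; simp at hc'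
  have := cwDist_add_cwDist hac
  have := cwDist_trans_cases a c b
  have := cwDist_lt a b
  refine Finset.disjoint_right.mpr fun f hf hf' => ?_
  obtain ⟨-, rfl⟩ := Finset.mem_filter.mp hf
  rcases Finset.mem_union.mp hf' with h | h <;> obtain ⟨-, h1, h2⟩ := mem_chordsIn.mp h <;> omega

/-- The chords of `T` inside the edge `ab` triangulate a `(k + 1)`-gon, which has `k - 2`
diagonals; the induction splits it along the triangle on `ab`. -/
lemma card_chordsIn (hT : IsTriangulation M T) {k : ℕ} :
    ∀ {a b : ZMod M}, IsEdge T a b → cwDist a b = k → 2 ≤ k →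
    #(chordsIn T a b) + 1 + (if s(a, b) ∈ T then 0 else 1) = k := by
  induction k using Nat.strong_induction_on with
  | _ k IH =>
  intro a b hab hk h2
  obtain ⟨c, hc, hac, hcb⟩ := hT.exists_apex hab (by omega)
  have hc' : 0 < cwDist a c ∧ cwDist a c < cwDist a b := hc
  have := cwDist_lt a b
  have := cwDist_trans_cases a c b
  have := cwDist_add_cwDist (a := a) (b := c) fun h => by subst h; simp at hc'
  have := cwDist_add_cwDist (a := c) (b := b) fun h => by subst h; omega
  have sub {x y : ZMod M} (hxy : IsEdge T x y) (h1 : 1 ≤ cwDist x y) (hlt : cwDist x y < k)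
      (h2' : 2 ≤ cwDist y x) : #(chordsIn T x y) + 1 = cwDist x y := by
    rcases (by omega : cwDist x y = 1 ∨ 2 ≤ cwDist x y) with h | h
    · rw [chordsIn_eq_empty hT h, h, Finset.card_empty]
    · have := IH _ hlt hxy rfl h
      rwa [if_pos (hxy.mem_of_two_le h h2'), add_zero] at this
  have hAC := sub hac (by omega) (by omega) (by omega)
  have hCB := sub hcb (by omega) (by omega) (by omega)
  rw [(chordsIn_subset_union hT hc hac hcb).antisymm (union_subset_chordsIn hc),
    Finset.card_union_of_disjoint (disjoint_chordsIn_union_filter hc),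
    Finset.card_union_of_disjoint (disjoint_chordsIn hT hc), Finset.filter_eq']
  split_ifs <;> simp only [Finset.card_singleton, Finset.card_empty] <;> omega

lemma _root_.IsTriangulation.card_eq (hT : IsTriangulation M T) (hM : 3 ≤ M) : #T = M - 3 := by
  have hM1 : 1 < M := by omega
  have hba : cwDist (-1 : ZMod M) 0 = 1 := (cwDist_eq_one hM1).mpr (by ring)
  have hab : cwDist 0 (-1 : ZMod M) = M - 1 := by
    have := cwDist_add_cwDist (a := (0 : ZMod M)) (b := -1) fun h => by
      rw [← h, cwDist_self] at hba; omega
    omega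
  have hall : chordsIn T 0 (-1) = T := by
    refine Finset.filter_true_of_mem fun f _ x _ => ?_
    have := cwDist_lt 0 x
    omega
  have hnot : s((0 : ZMod M), -1) ∉ T := fun h => by
    have := (hT.two_le_cwDist h).2
    omega
  have := card_chordsIn hT (Or.inr (Or.inr hba)) hab (by omega)
  rw [if_neg hnot, hall] at this
  omega

end Counting

section Flip

variable {M : ℕ} {T T' : Finset (Sym2 (ZMod M))}

/-- `c` and `d` are the apices of the two triangles of `T` on the chord `ab`, so that flipping
`ab` in `T` produces `cd`. -/
structure IsFlipQuad (T : Finset (Sym2 (ZMod M))) (a b c d : ZMod M) : Prop where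
  arc_c : arcMem M a b c
  arc_d : arcMem M b a d
  edge_ac : IsEdge T a c
  edge_cb : IsEdge T c b
  edge_bd : IsEdge T b d
  edge_da : IsEdge T d a

namespace IsFlipQuad

variable {a b c d : ZMod M}

lemma ne_ab_of_eq_apex {x y : ZMod M} (q : IsFlipQuad T a b c d) (hx : x = c ∨ x = d) :
    s(x, y) ≠ s(a, b) := by
  have hc : 0 < cwDist a c ∧ cwDist a c < cwDist a b := q.arc_c
  have hd : 0 < cwDist b d ∧ cwDist b d < cwDist b a := q.arc_d
  rw [Ne, Sym2.eq_iff]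
  rintro (⟨rfl, rfl⟩ | ⟨rfl, rfl⟩) <;> rcases hx with rfl | rfl <;> simp_all

lemma mono (q : IsFlipQuad T a b c d)
    (h : ∀ x y, s(x, y) ∈ T → s(x, y) ≠ s(a, b) → (x = a ∨ x = b) → s(x, y) ∈ T') :
    IsFlipQuad T' a b c d := by
  have keep {x y : ZMod M} (hxy : IsEdge T x y) (hx : x = a ∨ x = b) (hy : y = c ∨ y = d) :
      IsEdge T' x y := by
    rcases hxy with hxy | hxy
    · refine Or.inl (h x y hxy ?_ hx)
      rw [Sym2.eq_swap]
      exact q.ne_ab_of_eq_apex hy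
    · exact Or.inr hxy
  refine ⟨q.arc_c, q.arc_d, keep q.edge_ac (.inl rfl) (.inl rfl),
    (keep q.edge_cb.symm (.inr rfl) (.inl rfl)).symm, keep q.edge_bd (.inr rfl) (.inr rfl),
    (keep q.edge_da.symm (.inl rfl) (.inr rfl)).symm⟩

end IsFlipQuad

variable [NeZero M]

lemma crossPairs_cases_of_crossPairs_flip {a b c d x y : ZMod M}
    (hc : arcMem M a b c) (hd : arcMem M b a d) (h : crossPairs M c d x y) :
    crossPairs M a c x y ∨ crossPairs M c b x y ∨ crossPairs M b d x y ∨
      crossPairs M d a x y ∨ crossPairs M a b x y ∨ s(x, y) = s(a, b) := by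
  have ordered : ∀ u v : ZMod M, arcMem M c d u → arcMem M d c v →
      crossPairs M a c u v ∨ crossPairs M c b u v ∨ crossPairs M b d u v ∨
        crossPairs M d a u v ∨ crossPairs M a b u v ∨ s(u, v) = s(a, b) := by
    intro u v hu hv
    rw [arcMem_iff a] at hc hd hu hv
    unfold CycBetween at hc hd hu hv
    simp only [cwDist_self] at hc hd
    have := cwDist_lt a d
    have := cwDist_lt a u
    have := cwDist_lt a v
    have hu' : cwDist a c < cwDist a u ∧ cwDist a u < cwDist a d := by omega
    have hv' : cwDist a v < cwDist a c ∨ cwDist a d < cwDist a v := by omega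
    rcases lt_trichotomy (cwDist a u) (cwDist a b) with hub | hub | hub
    · refine Or.inr (Or.inl (Or.inl ⟨?_, ?_⟩)) <;> rw [arcMem_iff a] <;> unfold CycBetween <;>
        omega
    · obtain rfl := eq_of_cwDist_eq hub
      rcases hv' with hv' | hv'
      · rcases Nat.eq_zero_or_pos (cwDist a v) with hv0 | hv0
        · obtain rfl := cwDist_eq_zero.mp hv0
          exact Or.inr (Or.inr (Or.inr (Or.inr (Or.inr Sym2.eq_swap))))
        · refine Or.inl (Or.inr ⟨?_, ?_⟩) <;> rw [arcMem_iff a] <;> unfold CycBetween <;>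
            simp only [cwDist_self] <;> omega
      · refine Or.inr (Or.inr (Or.inr (Or.inl (Or.inr ⟨?_, ?_⟩)))) <;> rw [arcMem_iff a] <;>
          unfold CycBetween <;> simp only [cwDist_self] <;> omega
    · refine Or.inr (Or.inr (Or.inl (Or.inl ⟨?_, ?_⟩))) <;> rw [arcMem_iff a] <;>
        unfold CycBetween <;> omega
  rcases h with ⟨hx, hy⟩ | ⟨hy, hx⟩
  · exact ordered x y hx hy
  · simp only [crossPairs_swap_right (c := x), Sym2.eq_swap (a := x)]
    exact ordered y x hy hx

lemma eq_of_crossPairs_of_not_crossPairs_sides {a b c d x y : ZMod M}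
    (hc : arcMem M a b c) (hd : arcMem M b a d) (h : crossPairs M a b x y)
    (h1 : ¬ crossPairs M a c x y) (h2 : ¬ crossPairs M c b x y)
    (h3 : ¬ crossPairs M b d x y) (h4 : ¬ crossPairs M d a x y) : s(x, y) = s(c, d) := by
  have ordered : ∀ u v : ZMod M, arcMem M a b u → arcMem M b a v → ¬ crossPairs M a c u v →
      ¬ crossPairs M c b u v → ¬ crossPairs M b d u v → ¬ crossPairs M d a u v →
      u = c ∧ v = d := by
    intro u v hu hv h1 h2 h3 h4
    rw [arcMem_iff a] at hc hd hu hv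
    unfold CycBetween at hc hd hu hv
    simp only [cwDist_self] at hc hd hu hv
    have := cwDist_lt a b
    have := cwDist_lt a v
    constructor
    · refine eq_of_cwDist_eq (a := a) (le_antisymm ?_ ?_) <;> by_contra hlt
      · refine h2 (Or.inl ⟨?_, ?_⟩) <;> rw [arcMem_iff a] <;> unfold CycBetween <;> omega
      · refine h1 (Or.inl ⟨?_, ?_⟩) <;> rw [arcMem_iff a] <;> unfold CycBetween <;>
          simp only [cwDist_self] <;> omega
    · refine eq_of_cwDist_eq (a := a) (le_antisymm ?_ ?_) <;> by_contra hlt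
      · refine h4 (Or.inr ⟨?_, ?_⟩) <;> rw [arcMem_iff a] <;> unfold CycBetween <;>
          simp only [cwDist_self] <;> omega
      · refine h3 (Or.inr ⟨?_, ?_⟩) <;> rw [arcMem_iff a] <;> unfold CycBetween <;> omega
  rcases h with ⟨hx, hy⟩ | ⟨hy, hx⟩
  · obtain ⟨rfl, rfl⟩ := ordered x y hx hy h1 h2 h3 h4
    rfl
  · simp only [crossPairs_swap_right (c := x)] at h1 h2 h3 h4
    obtain ⟨rfl, rfl⟩ := ordered y x hy hx h1 h2 h3 h4
    exact Sym2.eq_swap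

lemma isDiagonal_flip {a b c d : ZMod M} (hc : arcMem M a b c) (hd : arcMem M b a d) :
    IsDiagonal M s(c, d) := by
  rw [arcMem_iff a] at hc hd
  unfold CycBetween at hc hd
  simp only [cwDist_self] at hc hd
  have := cwDist_lt a d
  rw [isDiagonal_mk_iff (by omega)]
  have := cwDist_trans_cases a c d
  have := cwDist_trans_cases a d c
  omega

lemma IsEdge.mem_of_crossPairs {a b x y : ZMod M} (h : IsEdge T a b)
    (hx : crossPairs M a b x y) : s(a, b) ∈ T := by
  rcases h with h | h | h
  · exact h
  · exact absurd hx (not_crossPairs_of_cwDist_eq_one h x y)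
  · exact absurd (crossPairs_swap_left.mp hx) (not_crossPairs_of_cwDist_eq_one h x y)

lemma _root_.IsTriangulation.exists_isFlipQuad (hT : IsTriangulation M T) {a b : ZMod M}
    (he : s(a, b) ∈ T) : ∃ c d, IsFlipQuad T a b c d := by
  obtain ⟨hab, hba⟩ := hT.two_le_cwDist he
  obtain ⟨c, hc, hac, hcb⟩ := hT.exists_apex (Or.inl he) hab
  obtain ⟨d, hd, hbd, hda⟩ := hT.exists_apex (Or.inl (by rwa [Sym2.eq_swap])) hba
  exact ⟨c, d, hc, hd, hac, hcb, hbd, hda⟩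

namespace IsFlipQuad

variable {a b c d : ZMod M}

lemma exists_crosses (q : IsFlipQuad T a b c d) {x y : ZMod M}
    (hxy : crossPairs M a b x y) (hne : s(x, y) ≠ s(c, d)) :
    ∃ u v, s(u, v) ∈ T ∧ s(u, v) ≠ s(a, b) ∧ (u = a ∨ u = b) ∧ Crosses M s(x, y) s(u, v) := by
  have side {u v : ZMod M} (huv : IsEdge T u v) (hu : u = a ∨ u = b) (hv : v = c ∨ v = d)
      (h : crossPairs M u v x y) :
      ∃ u v, s(u, v) ∈ T ∧ s(u, v) ≠ s(a, b) ∧ (u = a ∨ u = b) ∧ Crosses M s(x, y) s(u, v) :=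
    ⟨u, v, huv.mem_of_crossPairs h, by rw [Sym2.eq_swap]; exact q.ne_ab_of_eq_apex hv, hu,
      crosses_mk_iff.mpr (crossPairs_comm h)⟩
  by_contra hno
  refine hne (eq_of_crossPairs_of_not_crossPairs_sides q.arc_c q.arc_d hxy ?_ ?_ ?_ ?_)
  · exact fun h => hno (side q.edge_ac (.inl rfl) (.inl rfl) h)
  · exact fun h => hno (side q.edge_cb.symm (.inr rfl) (.inl rfl) (crossPairs_swap_left.mp h))
  · exact fun h => hno (side q.edge_bd (.inr rfl) (.inr rfl) h)
  · exact fun h => hno (side q.edge_da.symm (.inl rfl) (.inr rfl) (crossPairs_swap_left.mp h))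

variable (hT : IsTriangulation M T)
include hT

lemma eq_of_crosses (q : IsFlipQuad T a b c d) (he : s(a, b) ∈ T) {t : Sym2 (ZMod M)}
    (ht : t ∈ T) (hcr : Crosses M t s(c, d)) : t = s(a, b) := by
  obtain ⟨x, y, rfl⟩ := sym2_exists_eq_mk t
  rcases crossPairs_cases_of_crossPairs_flip q.arc_c q.arc_d
    (crossPairs_comm (crosses_mk_iff.mp hcr)) with h | h | h | h | h | h
  · exact absurd h (hT.not_crossPairs q.edge_ac (Or.inl ht))
  · exact absurd h (hT.not_crossPairs q.edge_cb (Or.inl ht))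
  · exact absurd h (hT.not_crossPairs q.edge_bd (Or.inl ht))
  · exact absurd h (hT.not_crossPairs q.edge_da (Or.inl ht))
  · exact absurd h (hT.not_crossPairs (Or.inl he) (Or.inl ht))
  · exact h

lemma eq_flip_of_crosses (q : IsFlipQuad T a b c d) {g : Sym2 (ZMod M)} (hg : g ∈ T)
    (hcr : Crosses M g s(a, b)) : g = s(c, d) := by
  obtain ⟨x, y, rfl⟩ := sym2_exists_eq_mk g
  exact eq_of_crossPairs_of_not_crossPairs_sides q.arc_c q.arc_d
    (crossPairs_comm (crosses_mk_iff.mp hcr))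
    (hT.not_crossPairs q.edge_ac (Or.inl hg)) (hT.not_crossPairs q.edge_cb (Or.inl hg))
    (hT.not_crossPairs q.edge_bd (Or.inl hg)) (hT.not_crossPairs q.edge_da (Or.inl hg))

end IsFlipQuad

end Flip

section Involution

open scoped Finset

variable {α : Type*} [DecidableEq α] {σ : α → α}

lemma exists_fixed_of_odd_card (hσ : Function.Involutive σ) {S : Finset α}
    (hS : ∀ x ∈ S, σ x ∈ S) (hodd : Odd #S) : ∃ x ∈ S, σ x = x := by
  by_contra! hne
  have : ∑ _ ∈ S, (1 : ZMod 2) = 0 :=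
    Finset.sum_involution (fun x _ => σ x) (fun _ _ => by decide) (fun x hx _ => hne x hx)
      hS (fun x _ => hσ x)
  rw [Finset.sum_const, nsmul_eq_mul, mul_one, ZMod.natCast_eq_zero_iff_even] at this
  exact Nat.not_even_iff_odd.mpr hodd this

lemma pair_eq_pair_iff (hσ : Function.Involutive σ) {x e : α} :
    ({x, σ x} : Finset α) = {e, σ e} ↔ x = e ∨ x = σ e := by
  constructor
  · intro h
    have : x ∈ ({e, σ e} : Finset α) := h ▸ Finset.mem_insert_self _ _
    simpa using this
  · rintro (rfl | rfl)
    · rfl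
    · rw [hσ, Finset.pair_comm]

lemma eq_pair_of_card_le_two (hσ : Function.Involutive σ) {S : Finset α}
    (hS : ∀ x ∈ S, σ x ∈ S) (hcard : #S ≤ 2)
    (hfix : ∀ x ∈ S, ∀ y ∈ S, σ x = x → σ y = y → x = y) {e : α} (he : e ∈ S) :
    S = {e, σ e} := by
  have three {x y z : α} (hx : x ∈ S) (hy : y ∈ S) (hz : z ∈ S) (hxy : x ≠ y) (hxz : x ≠ z)
      (hyz : y ≠ z) : False := by
    have := Finset.card_le_card (s := {x, y, z}) (t := S) (by simp [Finset.insert_subset_iff, *])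
    rw [Finset.card_eq_three.mpr ⟨x, y, z, hxy, hxz, hyz, rfl⟩] at this
    omega
  ext t
  simp only [Finset.mem_insert, Finset.mem_singleton]
  refine ⟨fun ht => ?_, by rintro (rfl | rfl) <;> simp [he, hS]⟩
  by_contra! hne
  have hσt : σ t ≠ e ∧ σ t ≠ σ e :=
    ⟨fun h => hne.2 (h ▸ (hσ t).symm), fun h => hne.1 (hσ.injective h)⟩
  by_cases hfe : σ e = e
  · by_cases hft : σ t = t
    · exact hne.1 (hfix t ht e he hft hfe)
    · exact three he ht (hS t ht) (Ne.symm hne.1) (Ne.symm hσt.1) (Ne.symm hft)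
  · exact three he (hS e he) ht (Ne.symm hfe) (Ne.symm hne.1) (Ne.symm hne.2)

lemma two_mul_card_image_pair (hσ : Function.Involutive σ) {S : Finset α}
    (hS : ∀ x ∈ S, σ x ∈ S) {D : α} (hD : D ∈ S) (hDfix : σ D = D)
    (hfix : ∀ x ∈ S, σ x = x → x = D) :
    2 * #(S.image fun x => ({x, σ x} : Finset α)) = #S + 1 := by
  set orb := fun x => ({x, σ x} : Finset α)
  have hfiber : ∀ O ∈ S.image orb, #{x ∈ S | orb x = O} = #O := by
    rintro _ hO
    obtain ⟨e, he, rfl⟩ := Finset.mem_image.mp hO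
    congr 1
    ext x
    simp only [Finset.mem_filter, orb, pair_eq_pair_iff hσ, Finset.mem_insert,
      Finset.mem_singleton]
    refine ⟨fun h => h.2, ?_⟩
    rintro (rfl | rfl)
    · exact ⟨he, Or.inl rfl⟩
    · exact ⟨hS e he, Or.inr rfl⟩
  have hpair : ∀ O ∈ (S.image orb).erase (orb D), #O = 2 := by
    intro O hO
    obtain ⟨hne, hO⟩ := Finset.mem_erase.mp hO
    obtain ⟨e, he, rfl⟩ := Finset.mem_image.mp hO
    exact Finset.card_pair fun h => hne (by rw [hfix e he h.symm])
  have hDmem : orb D ∈ S.image orb := Finset.mem_image_of_mem _ hD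
  have hpos := Finset.card_pos.mpr ⟨_, hDmem⟩
  rw [Finset.card_eq_sum_card_image orb S, Finset.sum_congr rfl hfiber,
    ← Finset.add_sum_erase _ _ hDmem, Finset.sum_congr rfl hpair, Finset.sum_const,
    Finset.card_erase_of_mem hDmem]
  simp only [orb, hDfix, Finset.mem_singleton, Finset.insert_eq_of_mem, Finset.card_singleton,
    smul_eq_mul]
  simp only [orb] at hpos
  omega

end Involution

section HalfTurn

variable {n : ℕ}

instance : NeZero (2 * n + 2) := ⟨by omega⟩

def opp (n : ℕ) (x : ZMod (2 * n + 2)) : ZMod (2 * n + 2) := x + ((n : ZMod (2 * n + 2)) + 1)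

/-- `CSTriangulation` states its symmetry with this map unfolded. -/
def oppChord (n : ℕ) : Sym2 (ZMod (2 * n + 2)) → Sym2 (ZMod (2 * n + 2)) := Sym2.map (opp n)

lemma cwDist_opp (x : ZMod (2 * n + 2)) : cwDist x (opp n x) = n + 1 := by
  have : Fact (1 < 2 * n + 2) := ⟨by omega⟩
  rw [cwDist, opp, add_sub_cancel_left, ZMod.val_add, ZMod.val_one,
    ZMod.val_cast_of_lt (by omega), Nat.mod_eq_of_lt (by omega)]

@[simp] lemma opp_opp (x : ZMod (2 * n + 2)) : opp n (opp n x) = x := by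
  have h := ZMod.natCast_self (2 * n + 2)
  push_cast at h
  unfold opp
  linear_combination h

lemma opp_ne (x : ZMod (2 * n + 2)) : opp n x ≠ x := fun h => by
  simpa [h] using cwDist_opp (n := n) x

lemma cwDist_opp_opp (x y : ZMod (2 * n + 2)) : cwDist (opp n x) (opp n y) = cwDist x y := by
  simp only [cwDist, opp, add_sub_add_right_eq_sub]

lemma arcMem_opp {u v w : ZMod (2 * n + 2)} :
    arcMem (2 * n + 2) (opp n u) (opp n v) (opp n w) ↔ arcMem (2 * n + 2) u v w := by
  simp only [arcMem, opp, add_sub_add_right_eq_sub]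

lemma crossPairs_opp {u v w z : ZMod (2 * n + 2)} :
    crossPairs (2 * n + 2) (opp n u) (opp n v) (opp n w) (opp n z) ↔
      crossPairs (2 * n + 2) u v w z := by
  simp only [crossPairs, arcMem_opp]

lemma eq_opp_iff {x y : ZMod (2 * n + 2)} : y = opp n x ↔ cwDist x y = n + 1 := by
  refine ⟨fun h => h ▸ cwDist_opp x, fun h => eq_of_cwDist_eq (a := x) ?_⟩
  rw [h, cwDist_opp]

@[simp] lemma oppChord_mk (x y : ZMod (2 * n + 2)) : oppChord n s(x, y) = s(opp n x, opp n y) :=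
  rfl

lemma oppChord_involutive : Function.Involutive (oppChord n) := by
  intro e
  obtain ⟨x, y, rfl⟩ := sym2_exists_eq_mk e
  simp [opp_opp]

@[simp] lemma oppChord_oppChord (e : Sym2 (ZMod (2 * n + 2))) : oppChord n (oppChord n e) = e :=
  oppChord_involutive e

lemma crosses_oppChord_iff {e f : Sym2 (ZMod (2 * n + 2))} :
    Crosses (2 * n + 2) (oppChord n e) (oppChord n f) ↔ Crosses (2 * n + 2) e f := by
  obtain ⟨a, b, rfl⟩ := sym2_exists_eq_mk e
  obtain ⟨c, d, rfl⟩ := sym2_exists_eq_mk f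
  rw [oppChord_mk, oppChord_mk, crosses_mk_iff, crosses_mk_iff, crossPairs_opp]

lemma isCentral_mk_iff {x y : ZMod (2 * n + 2)} : IsCentral n s(x, y) ↔ y = opp n x := by
  have hopp (a : ZMod (2 * n + 2)) : a + (n : ZMod (2 * n + 2)) + 1 = opp n a := by
    rw [opp, add_assoc]
  simp only [IsCentral, hopp, Sym2.eq_iff]
  constructor
  · rintro ⟨a, ⟨rfl, rfl⟩ | ⟨rfl, rfl⟩⟩
    · rfl
    · rw [opp_opp]
  · intro h
    exact ⟨x, Or.inl ⟨rfl, h⟩⟩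

lemma oppChord_eq_self_iff {e : Sym2 (ZMod (2 * n + 2))} : oppChord n e = e ↔ IsCentral n e := by
  obtain ⟨x, y, rfl⟩ := sym2_exists_eq_mk e
  rw [oppChord_mk, Sym2.eq_iff, isCentral_mk_iff]
  constructor
  · rintro (⟨h, -⟩ | ⟨-, h⟩)
    · exact absurd h (opp_ne x)
    · rw [← h, opp_opp]
  · rintro rfl
    exact Or.inr ⟨rfl, opp_opp x⟩

lemma isCentral_of_mem_of_mem_oppChord {a : ZMod (2 * n + 2)} {e : Sym2 (ZMod (2 * n + 2))}
    (ha : a ∈ e) (ha' : a ∈ oppChord n e) : IsCentral n e := by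
  obtain ⟨x, y, rfl⟩ := sym2_exists_eq_mk e
  rw [isCentral_mk_iff]
  rw [oppChord_mk, Sym2.mem_iff] at ha'
  rcases Sym2.mem_iff.mp ha with rfl | rfl <;> rcases ha' with h | h
  · exact absurd h.symm (opp_ne _)
  · rw [h, opp_opp]
  · exact h
  · exact absurd h.symm (opp_ne _)

lemma crossPairs_of_isCentral {x y u v : ZMod (2 * n + 2)} (h1 : IsCentral n s(x, y))
    (h2 : IsCentral n s(u, v)) (hne : s(x, y) ≠ s(u, v)) : crossPairs (2 * n + 2) x y u v := by
  rw [isCentral_mk_iff, eq_opp_iff] at h1 h2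
  have := cwDist_trans_cases x u v
  have := cwDist_lt x u
  have := cwDist_lt x v
  have h3 : ¬ (cwDist x u = 0 ∧ cwDist x v = n + 1) := fun ⟨h, h'⟩ =>
    hne (Sym2.eq_iff.mpr (Or.inl ⟨cwDist_eq_zero.mp h, eq_of_cwDist_eq (a := x) (by omega)⟩))
  have h4 : ¬ (cwDist x v = 0 ∧ cwDist x u = n + 1) := fun ⟨h, h'⟩ =>
    hne (Sym2.eq_iff.mpr (Or.inr ⟨cwDist_eq_zero.mp h, eq_of_cwDist_eq (a := x) (by omega)⟩))
  simp only [crossPairs, arcMem_iff x, CycBetween, cwDist_self]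
  omega

end HalfTurn

section CentrallySymmetric

open scoped Finset

variable {n : ℕ} {T : Finset (Sym2 (ZMod (2 * n + 2)))}

/-- One flip in `typeBGraph n` removes one such orbit and adds another. -/
def orbit (n : ℕ) (e : Sym2 (ZMod (2 * n + 2))) : Finset (Sym2 (ZMod (2 * n + 2))) :=
  {e, oppChord n e}

lemma mem_orbit {e f : Sym2 (ZMod (2 * n + 2))} : f ∈ orbit n e ↔ f = e ∨ f = oppChord n e := by
  simp [orbit]

lemma _root_.CSTriangulation.oppChord_mem (hT : CSTriangulation n T)
    {e : Sym2 (ZMod (2 * n + 2))} (he : e ∈ T) : oppChord n e ∈ T :=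
  hT.2 e he

lemma _root_.CSTriangulation.oppChord_mem_iff (hT : CSTriangulation n T)
    {e : Sym2 (ZMod (2 * n + 2))} : oppChord n e ∈ T ↔ e ∈ T :=
  ⟨fun h => oppChord_involutive e ▸ hT.oppChord_mem h, hT.oppChord_mem⟩

lemma _root_.CSTriangulation.isEdge_opp (hT : CSTriangulation n T) {u v : ZMod (2 * n + 2)}
    (h : IsEdge T u v) : IsEdge T (opp n u) (opp n v) := by
  rcases h with h | h | h
  · exact Or.inl (hT.oppChord_mem h)
  · exact Or.inr (Or.inl (by rwa [cwDist_opp_opp]))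
  · exact Or.inr (Or.inr (by rwa [cwDist_opp_opp]))

variable (hn : 1 ≤ n)
include hn

lemma _root_.CSTriangulation.card_eq (hT : CSTriangulation n T) : #T = 2 * n - 1 := by
  have := hT.1.card_eq (by omega)
  omega

/-- The half-turn acts on the `2n - 1` diagonals, so it fixes one of them; two central diagonals
would cross. -/
lemma _root_.CSTriangulation.existsUnique_central (hT : CSTriangulation n T) :
    ∃! D, IsCentral n D ∧ D ∈ T := by
  obtain ⟨D, hDT, hD⟩ := exists_fixed_of_odd_card oppChord_involutive (fun _ => hT.oppChord_mem)
    (by rw [hT.card_eq hn]; exact ⟨n - 1, by omega⟩)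
  refine ⟨D, ⟨oppChord_eq_self_iff.mp hD, hDT⟩, fun D' ⟨hD'c, hD'T⟩ => ?_⟩
  by_contra hne
  obtain ⟨x, y, rfl⟩ := sym2_exists_eq_mk D'
  obtain ⟨u, v, rfl⟩ := sym2_exists_eq_mk D
  exact hT.1.2.1 _ hD'T _ hDT (crosses_mk_iff.mpr
    (crossPairs_of_isCentral hD'c (oppChord_eq_self_iff.mp hD) hne))

lemma _root_.CSTriangulation.eq_of_isCentral (hT : CSTriangulation n T)
    {e f : Sym2 (ZMod (2 * n + 2))} (he : e ∈ T) (hf : f ∈ T) (hec : IsCentral n e)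
    (hfc : IsCentral n f) : e = f :=
  (hT.existsUnique_central hn).unique ⟨hec, he⟩ ⟨hfc, hf⟩

lemma _root_.CSTriangulation.card_image_orbit (hT : CSTriangulation n T) :
    #(T.image (orbit n)) = n := by
  obtain ⟨D, ⟨hDc, hDT⟩, -⟩ := hT.existsUnique_central hn
  have : 2 * #(T.image (orbit n)) = #T + 1 :=
    two_mul_card_image_pair oppChord_involutive (fun _ => hT.oppChord_mem) hDT
    (oppChord_eq_self_iff.mpr hDc)
    (fun x hx hfix => hT.eq_of_isCentral hn hx hDT (oppChord_eq_self_iff.mp hfix) hDc)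
  rw [hT.card_eq hn] at this
  omega

end CentrallySymmetric

section CSFlip

variable {n : ℕ} {T T' : Finset (Sym2 (ZMod (2 * n + 2)))} {a b c d : ZMod (2 * n + 2)}

def csFlip (T : Finset (Sym2 (ZMod (2 * n + 2)))) (e f : Sym2 (ZMod (2 * n + 2))) :
    Finset (Sym2 (ZMod (2 * n + 2))) :=
  T \ orbit n e ∪ orbit n f

lemma mem_csFlip {e f t : Sym2 (ZMod (2 * n + 2))} :
    t ∈ csFlip T e f ↔ (t ∈ T ∧ t ∉ orbit n e) ∨ t ∈ orbit n f := by
  simp [csFlip]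

lemma eq_of_mem_orbit {e t : Sym2 (ZMod (2 * n + 2))} {x : ZMod (2 * n + 2)} (hx : x ∈ e)
    (hxt : x ∈ t) (ht : t ∈ orbit n e) : t = e := by
  rcases mem_orbit.mp ht with rfl | rfl
  · rfl
  · exact oppChord_eq_self_iff.mpr (isCentral_of_mem_of_mem_oppChord hx hxt)

lemma IsFlipQuad.of_sdiff_subset_orbit (q : IsFlipQuad T a b c d)
    (h : T \ T' ⊆ orbit n s(a, b)) : IsFlipQuad T' a b c d := by
  refine q.mono fun x y hxy hne hx => ?_
  by_contra hxy'
  refine hne (eq_of_mem_orbit (x := x) ?_ (Sym2.mem_mk_left x y)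
    (h (Finset.mem_sdiff.mpr ⟨hxy, hxy'⟩)))
  rcases hx with rfl | rfl <;> simp

lemma oppChord_mem_csFlip (hT : CSTriangulation n T) {e f t : Sym2 (ZMod (2 * n + 2))}
    (ht : t ∈ csFlip T e f) : oppChord n t ∈ csFlip T e f := by
  simp only [mem_csFlip, mem_orbit, oppChord_involutive.eq_iff, oppChord_oppChord,
    hT.oppChord_mem_iff] at ht ⊢
  tauto

lemma IsFlipQuad.flip_not_mem (hT : CSTriangulation n T) (q : IsFlipQuad T a b c d)
    (he : s(a, b) ∈ T) :
    s(c, d) ∉ T := fun h =>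
  hT.1.2.1 _ he _ h (crosses_mk_iff.mpr (Or.inl ⟨q.arc_c, q.arc_d⟩))

lemma IsFlipQuad.eq_oppChord_of_crosses_oppChord (hT : CSTriangulation n T)
    (q : IsFlipQuad T a b c d) (he : s(a, b) ∈ T) {t : Sym2 (ZMod (2 * n + 2))} (ht : t ∈ T)
    (hcr : Crosses (2 * n + 2) t (oppChord n s(c, d))) : t = oppChord n s(a, b) := by
  rw [← crosses_oppChord_iff, oppChord_involutive] at hcr
  rw [← q.eq_of_crosses hT.1 he (hT.oppChord_mem ht) hcr, oppChord_involutive]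

/-- If `ab` is central, the half-turn maps the quadrilateral to itself, so `cd` is central
too; otherwise a crossing would force the half-turn image of `ab` to share an endpoint with
`ab`. -/
lemma IsFlipQuad.not_crosses_oppChord_flip (hT : CSTriangulation n T) (q : IsFlipQuad T a b c d)
    (he : s(a, b) ∈ T) :
    ¬ Crosses (2 * n + 2) s(c, d) (oppChord n s(c, d)) := by
  by_cases hcent : IsCentral n s(a, b)
  · have hb : b = opp n a := isCentral_mk_iff.mp hcent
    have hd : d = opp n c := by
      refine hT.1.apex_unique q.arc_d q.edge_bd q.edge_da ?_ ?_ ?_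
      · simpa [hb, opp_opp] using arcMem_opp.mpr q.arc_c
      · simpa [hb] using hT.isEdge_opp q.edge_ac
      · simpa [hb, opp_opp] using hT.isEdge_opp q.edge_cb
    rw [oppChord_eq_self_iff.mpr (isCentral_mk_iff.mpr hd)]
    exact not_crosses_self _
  intro hcr
  have shares {u v : ZMod (2 * n + 2)} (huv : IsEdge T u v) (hu : u = a ∨ u = b)
      (h : crossPairs (2 * n + 2) u v (opp n c) (opp n d)) : False := by
    have hmem := huv.mem_of_crossPairs h
    have := q.eq_oppChord_of_crosses_oppChord hT he hmem (crosses_mk_iff.mpr h)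
    refine hcent (isCentral_of_mem_of_mem_oppChord (a := u) ?_ (this ▸ Sym2.mem_mk_left u v))
    rcases hu with rfl | rfl <;> simp
  rw [oppChord_mk, crosses_mk_iff] at hcr
  rcases crossPairs_cases_of_crossPairs_flip q.arc_c q.arc_d hcr with h | h | h | h | h | h
  · exact shares q.edge_ac (.inl rfl) h
  · exact shares q.edge_cb.symm (.inr rfl) (crossPairs_swap_left.mp h)
  · exact shares q.edge_bd (.inr rfl) h
  · exact shares q.edge_da.symm (.inl rfl) (crossPairs_swap_left.mp h)
  · exact shares (Or.inl he) (.inl rfl) h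
  · refine q.flip_not_mem hT he ?_
    rw [← oppChord_involutive s(c, d), oppChord_mk, h]
    exact hT.oppChord_mem he

lemma IsFlipQuad.isDiagonal_of_mem_csFlip (hT : CSTriangulation n T) (q : IsFlipQuad T a b c d)
    {t : Sym2 (ZMod (2 * n + 2))} (ht : t ∈ csFlip T s(a, b) s(c, d)) :
    IsDiagonal (2 * n + 2) t := by
  rcases mem_csFlip.mp ht with ⟨ht, -⟩ | ht
  · exact hT.1.1 t ht
  have := isDiagonal_flip q.arc_c q.arc_d
  rcases mem_orbit.mp ht with rfl | rfl
  · exact this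
  · rw [oppChord_mk, isDiagonal_mk_iff (by omega), cwDist_opp_opp, cwDist_opp_opp,
      ← isDiagonal_mk_iff (by omega)]
    exact this

lemma IsFlipQuad.not_crosses_of_mem_csFlip (hT : CSTriangulation n T) (q : IsFlipQuad T a b c d)
    (he : s(a, b) ∈ T)
    {t g : Sym2 (ZMod (2 * n + 2))}
    (ht : t ∈ csFlip T s(a, b) s(c, d)) (hg : g ∈ csFlip T s(a, b) s(c, d)) :
    ¬ Crosses (2 * n + 2) t g := by
  have old_new {t g : Sym2 (ZMod (2 * n + 2))} (ht : t ∈ T) (ht' : t ∉ orbit n s(a, b))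
      (hg : g ∈ orbit n s(c, d)) : ¬ Crosses (2 * n + 2) t g := by
    rcases mem_orbit.mp hg with rfl | rfl <;> refine fun hcr => ht' (mem_orbit.mpr ?_)
    · exact Or.inl (q.eq_of_crosses hT.1 he ht hcr)
    · exact Or.inr (q.eq_oppChord_of_crosses_oppChord hT he ht hcr)
  rcases mem_csFlip.mp ht with ⟨ht, ht'⟩ | ht <;> rcases mem_csFlip.mp hg with ⟨hg, hg'⟩ | hg
  · exact hT.1.2.1 t ht g hg
  · exact old_new ht ht' hg
  · exact fun h => old_new hg hg' ht h.symm
  have hflip := q.not_crosses_oppChord_flip hT he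
  rcases mem_orbit.mp ht with rfl | rfl <;> rcases mem_orbit.mp hg with rfl | rfl
  · exact not_crosses_self _
  · exact hflip
  · exact fun h => hflip h.symm
  · exact not_crosses_self _

lemma IsFlipQuad.exists_crosses_csFlip_of_crosses (q : IsFlipQuad T a b c d)
    {g : Sym2 (ZMod (2 * n + 2))} (hg : g ∉ csFlip T s(a, b) s(c, d))
    (hcr : Crosses (2 * n + 2) g s(a, b)) :
    ∃ h ∈ csFlip T s(a, b) s(c, d), Crosses (2 * n + 2) g h := by
  obtain ⟨x, y, rfl⟩ := sym2_exists_eq_mk g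
  have hne : s(x, y) ≠ s(c, d) := fun h =>
    hg (mem_csFlip.mpr (Or.inr (mem_orbit.mpr (Or.inl h))))
  obtain ⟨u, v, huv, hne', hu, hcr'⟩ :=
    q.exists_crosses (crossPairs_comm (crosses_mk_iff.mp hcr)) hne
  refine ⟨s(u, v), mem_csFlip.mpr (Or.inl ⟨huv, fun hmem => hne' ?_⟩), hcr'⟩
  exact eq_of_mem_orbit (x := u) (by rcases hu with rfl | rfl <;> simp)
    (Sym2.mem_mk_left u v) hmem

lemma IsFlipQuad.exists_crosses_csFlip (hT : CSTriangulation n T) (q : IsFlipQuad T a b c d)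
    {g : Sym2 (ZMod (2 * n + 2))} (hg : IsDiagonal (2 * n + 2) g)
    (hgF : g ∉ csFlip T s(a, b) s(c, d)) :
    ∃ h ∈ csFlip T s(a, b) s(c, d), Crosses (2 * n + 2) g h := by
  have hcd : s(c, d) ∈ csFlip T s(a, b) s(c, d) :=
    mem_csFlip.mpr (Or.inr (Finset.mem_insert_self _ _))
  by_cases hgT : g ∈ T
  · have hgO : g ∈ orbit n s(a, b) := by
      by_contra h
      exact hgF (mem_csFlip.mpr (Or.inl ⟨hgT, h⟩))
    have hcr : Crosses (2 * n + 2) s(a, b) s(c, d) :=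
      crosses_mk_iff.mpr (Or.inl ⟨q.arc_c, q.arc_d⟩)
    rcases mem_orbit.mp hgO with rfl | rfl
    · exact ⟨_, hcd, hcr⟩
    · exact ⟨_, oppChord_mem_csFlip hT hcd, crosses_oppChord_iff.mpr hcr⟩
  obtain ⟨t, htT, hcr⟩ := hT.1.2.2 g hg hgT
  by_cases htO : t ∈ orbit n s(a, b)
  · rcases mem_orbit.mp htO with rfl | rfl
    · exact q.exists_crosses_csFlip_of_crosses hgF hcr
    · have hg' : oppChord n g ∉ csFlip T s(a, b) s(c, d) := fun h =>
        hgF (oppChord_oppChord g ▸ oppChord_mem_csFlip hT h)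
      obtain ⟨h, hh, hcr'⟩ := q.exists_crosses_csFlip_of_crosses hg'
        (by simpa using crosses_oppChord_iff.mpr hcr)
      exact ⟨_, oppChord_mem_csFlip hT hh, by simpa using crosses_oppChord_iff.mpr hcr'⟩
  · exact ⟨t, mem_csFlip.mpr (Or.inl ⟨htT, htO⟩), hcr⟩

lemma IsFlipQuad.cstriangulation_csFlip (hT : CSTriangulation n T) (q : IsFlipQuad T a b c d)
    (he : s(a, b) ∈ T) :
    CSTriangulation n (csFlip T s(a, b) s(c, d)) :=
  ⟨⟨fun _ => q.isDiagonal_of_mem_csFlip hT,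
    fun _ ht _ hg => q.not_crosses_of_mem_csFlip hT he ht hg,
    fun _ => q.exists_crosses_csFlip hT⟩, fun _ => oppChord_mem_csFlip hT⟩

lemma IsFlipQuad.sdiff_csFlip (hT : CSTriangulation n T) (q : IsFlipQuad T a b c d)
    (he : s(a, b) ∈ T) :
    T \ csFlip T s(a, b) s(c, d) = orbit n s(a, b) := by
  have hcd := q.flip_not_mem hT he
  ext t
  simp only [Finset.mem_sdiff, mem_csFlip, mem_orbit]
  constructor
  · tauto
  · rintro (rfl | rfl)
    · refine ⟨he, ?_⟩
      rintro (⟨-, h⟩ | h | h)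
      · exact h (Or.inl rfl)
      · exact hcd (h ▸ he)
      · exact hcd (by rw [← oppChord_oppChord s(c, d), ← h]; exact hT.oppChord_mem he)
    · refine ⟨hT.oppChord_mem he, ?_⟩
      rintro (⟨-, h⟩ | h | h)
      · exact h (Or.inr rfl)
      · exact hcd (h ▸ hT.oppChord_mem he)
      · exact hcd (oppChord_involutive.injective h ▸ he)

lemma IsFlipQuad.mem_orbit_of_sdiff_eq (hT : CSTriangulation n T) (q : IsFlipQuad T a b c d)
    (hT' : CSTriangulation n T') (hdiff : T \ T' = orbit n s(a, b)) {g : Sym2 (ZMod (2 * n + 2))}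
    (hg : g ∈ T') (hgT : g ∉ T) : g ∈ orbit n s(c, d) := by
  have q' := q.of_sdiff_subset_orbit hdiff.subset
  obtain ⟨t, htT, hcr⟩ := hT.1.2.2 g (hT'.1.1 g hg) hgT
  have htO : t ∈ orbit n s(a, b) :=
    hdiff ▸ Finset.mem_sdiff.mpr ⟨htT, fun ht' => hT'.1.2.1 g hg t ht' hcr⟩
  rcases mem_orbit.mp htO with rfl | rfl
  · exact mem_orbit.mpr (Or.inl (q'.eq_flip_of_crosses hT'.1 hg hcr))
  · refine mem_orbit.mpr (Or.inr ?_)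
    rw [← q'.eq_flip_of_crosses hT'.1 (hT'.oppChord_mem hg)
      (by simpa using crosses_oppChord_iff.mpr hcr), oppChord_oppChord]

/-- A centrally symmetric triangulation that drops exactly the orbit of `ab` keeps the sides of
the quadrilateral, so its new diagonals cross `ab` or its image and hence are `cd` or its
image. -/
lemma IsFlipQuad.eq_csFlip (hT : CSTriangulation n T) (q : IsFlipQuad T a b c d)
    (he : s(a, b) ∈ T) (hT' : CSTriangulation n T') (hdiff : T \ T' = orbit n s(a, b)) :
    T' = csFlip T s(a, b) s(c, d) := by
  have hdrop {t} (ht : t ∈ T) : t ∉ T' ↔ t ∈ orbit n s(a, b) := by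
    rw [← hdiff, Finset.mem_sdiff]
    exact ⟨fun h => ⟨ht, h⟩, And.right⟩
  have hcd : s(c, d) ∈ T' := by
    have heT' : s(a, b) ∉ T' := (hdrop he).mpr (Finset.mem_insert_self _ _)
    obtain ⟨g, hg, hcr⟩ := hT'.1.2.2 _ (hT.1.1 _ he) heT'
    have hgO := q.mem_orbit_of_sdiff_eq hT hT' hdiff hg fun hgT => hT.1.2.1 _ he g hgT hcr
    rcases mem_orbit.mp hgO with rfl | rfl
    · exact hg
    · simpa using hT'.oppChord_mem hg
  ext t
  rw [mem_csFlip]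
  constructor
  · intro ht
    by_cases htT : t ∈ T
    · exact Or.inl ⟨htT, fun h => (hdrop htT).mpr h ht⟩
    · exact Or.inr (q.mem_orbit_of_sdiff_eq hT hT' hdiff ht htT)
  · rintro (⟨htT, ht⟩ | ht)
    · by_contra h
      exact ht ((hdrop htT).mp h)
    · rcases mem_orbit.mp ht with rfl | rfl
      · exact hcd
      · exact hT'.oppChord_mem hcd

end CSFlip

section Graph

open scoped Finset

variable {n : ℕ} {T T' T₁ T₂ : Finset (Sym2 (ZMod (2 * n + 2)))}

lemma _root_.IsTriangulation.eq_of_subset {M : ℕ} {T T' : Finset (Sym2 (ZMod M))}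
    (hT : IsTriangulation M T) (hT' : IsTriangulation M T') (h : T ⊆ T') : T = T' := by
  refine Finset.Subset.antisymm h fun g hg => ?_
  by_contra hgT
  obtain ⟨t, ht, hcr⟩ := hT.2.2 g (hT'.1 g hg) hgT
  exact hT'.2.1 g hg t (h ht) hcr

lemma exists_sdiff_eq_orbit_of_mem (hT : CSTriangulation n T) {e : Sym2 (ZMod (2 * n + 2))}
    (he : e ∈ T) : ∃ T', CSTriangulation n T' ∧ T \ T' = orbit n e ∧ #(T' \ T) ≤ 2 := by
  obtain ⟨x, y, rfl⟩ := sym2_exists_eq_mk e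
  obtain ⟨c, d, q⟩ := hT.1.exists_isFlipQuad he
  refine ⟨_, q.cstriangulation_csFlip hT he, q.sdiff_csFlip hT he, ?_⟩
  refine (Finset.card_le_card (t := orbit n s(c, d)) fun t ht => ?_).trans
    (Finset.card_le_two (a := s(c, d)) (b := oppChord n s(c, d)))
  obtain ⟨ht, htT⟩ := Finset.mem_sdiff.mp ht
  rcases mem_csFlip.mp ht with h | h
  · exact absurd h.1 htT
  · exact h

lemma eq_of_sdiff_eq_orbit (hT : CSTriangulation n T) (h₁ : CSTriangulation n T₁)
    (h₂ : CSTriangulation n T₂) {e : Sym2 (ZMod (2 * n + 2))} (he : e ∈ T)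
    (hd₁ : T \ T₁ = orbit n e) (hd₂ : T \ T₂ = orbit n e) : T₁ = T₂ := by
  obtain ⟨x, y, rfl⟩ := sym2_exists_eq_mk e
  obtain ⟨c, d, q⟩ := hT.1.exists_isFlipQuad he
  rw [q.eq_csFlip hT he h₁ hd₁, q.eq_csFlip hT he h₂ hd₂]

variable (hn : 1 ≤ n)
include hn

lemma exists_sdiff_eq_orbit (hT : CSTriangulation n T) (hT' : CSTriangulation n T')
    (hne : T ≠ T') (hcard : #(T \ T') ≤ 2) : ∃ e ∈ T, T \ T' = orbit n e := by
  obtain ⟨e, he⟩ : (T \ T').Nonempty := Finset.sdiff_nonempty.mpr fun h =>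
    hne (hT.1.eq_of_subset hT'.1 h)
  refine ⟨e, (Finset.mem_sdiff.mp he).1, eq_pair_of_card_le_two oppChord_involutive ?_ hcard ?_ he⟩
  · intro x hx
    obtain ⟨hxT, hxT'⟩ := Finset.mem_sdiff.mp hx
    exact Finset.mem_sdiff.mpr ⟨hT.oppChord_mem hxT, fun h => hxT' (hT'.oppChord_mem_iff.mp h)⟩
  · intro x hx y hy hxc hyc
    exact hT.eq_of_isCentral hn (Finset.mem_sdiff.mp hx).1 (Finset.mem_sdiff.mp hy).1
      (oppChord_eq_self_iff.mp hxc) (oppChord_eq_self_iff.mp hyc)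

lemma typeBGraph_adj_iff {T T' : {T // CSTriangulation n T}} :
    (typeBGraph n).Adj T T' ↔ ∃ e ∈ T.1, T.1 \ T'.1 = orbit n e := by
  constructor
  · rintro ⟨hne, hcard, -⟩
    exact exists_sdiff_eq_orbit hn T.2 T'.2 (fun h => hne (Subtype.ext h)) hcard
  · rintro ⟨e, he, hd⟩
    obtain ⟨T'', hT'', hd', hcard⟩ := exists_sdiff_eq_orbit_of_mem T.2 he
    obtain rfl : T'.1 = T'' := eq_of_sdiff_eq_orbit T.2 T'.2 hT'' he hd hd'
    refine ⟨fun h => ?_, hd ▸ Finset.card_le_two, hcard⟩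
    have : e ∈ T.1 \ T'.1 := hd ▸ Finset.mem_insert_self _ _
    simp [h] at this

/-- Neighbours of `T` correspond to the orbits of diagonals of `T` under the half-turn. -/
lemma card_typeBGraph_adj (T : {T // CSTriangulation n T}) :
    Nat.card {T' // (typeBGraph n).Adj T T'} = n := by
  let f : {T' // (typeBGraph n).Adj T T'} → T.1.image (orbit n) := fun T' =>
    ⟨T.1 \ T'.1.1, by
      obtain ⟨e, he, hd⟩ := (typeBGraph_adj_iff hn).mp T'.2
      exact Finset.mem_image.mpr ⟨e, he, hd.symm⟩⟩
  have hf : Function.Bijective f := by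
    constructor
    · intro T₁ T₂ h
      obtain ⟨e, he, hd⟩ := (typeBGraph_adj_iff hn).mp T₁.2
      have hd' : T.1 \ T₂.1.1 = orbit n e := (congrArg Subtype.val h).symm.trans hd
      exact Subtype.ext (Subtype.ext (eq_of_sdiff_eq_orbit T.2 T₁.1.2 T₂.1.2 he hd hd'))
    · rintro ⟨O, hO⟩
      obtain ⟨e, he, rfl⟩ := Finset.mem_image.mp hO
      obtain ⟨T', hT', hd, -⟩ := exists_sdiff_eq_orbit_of_mem T.2 he
      exact ⟨⟨⟨T', hT'⟩, (typeBGraph_adj_iff hn).mpr ⟨e, he, hd⟩⟩, Subtype.ext hd⟩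
  rw [Nat.card_eq_of_bijective f hf, Nat.card_eq_finsetCard, T.2.card_image_orbit hn]

/-- Only the flip of the orbit of `D` removes `D`. -/
lemma card_typeBGraph_adj_not_mem_le_one (T : {T // CSTriangulation n T})
    {D : Sym2 (ZMod (2 * n + 2))} (hD : D ∈ T.1) :
    Nat.card {T' // (typeBGraph n).Adj T T' ∧ D ∉ T'.1} ≤ 1 := by
  have hdiff (T' : {T' // (typeBGraph n).Adj T T' ∧ D ∉ T'.1}) : T.1 \ T'.1.1 = orbit n D := by
    obtain ⟨e, he, hd⟩ := (typeBGraph_adj_iff hn).mp T'.2.1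
    have hDe : D ∈ orbit n e := hd ▸ Finset.mem_sdiff.mpr ⟨hD, T'.2.2⟩
    rw [hd, orbit, orbit, pair_eq_pair_iff oppChord_involutive]
    rcases mem_orbit.mp hDe with rfl | rfl
    · exact Or.inl rfl
    · exact Or.inr (oppChord_oppChord e).symm
  rw [Finite.card_le_one_iff_subsingleton]
  exact ⟨fun T₁ T₂ => Subtype.ext (Subtype.ext
    (eq_of_sdiff_eq_orbit T.2 T₁.1.2 T₂.1.2 hD (hdiff T₁) (hdiff T₂)))⟩

end Graph

end TypeBAssociahedron


open TypeBAssociahedron in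
/-- For `n ≥ 1`, the type-B associahedron graph `\U0001d51fₙ` is regular of degree `n`; every vertex
(centrally symmetric triangulation) lies in exactly one class `Ψ(D)` (it contains a unique
central diagonal `D`); and each vertex of `Ψ(D)` has at most one neighbor outside `Ψ(D)`. -/
theorem typeB_regular_and_partition (n : ℕ) (hn : 1 ≤ n) :
    (∀ T : {T : Finset (Sym2 (ZMod (2 * n + 2))) // CSTriangulation n T},
        Nat.card {T' // (typeBGraph n).Adj T T'} = n) ∧
    (∀ T : {T : Finset (Sym2 (ZMod (2 * n + 2))) // CSTriangulation n T},
        ∃! D : Sym2 (ZMod (2 * n + 2)), IsCentral n D ∧ D ∈ T.val) ∧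
    (∀ T : {T : Finset (Sym2 (ZMod (2 * n + 2))) // CSTriangulation n T},
        ∀ D : Sym2 (ZMod (2 * n + 2)), IsCentral n D → D ∈ T.val →
          Nat.card {T' // (typeBGraph n).Adj T T' ∧ D ∉ T'.val} ≤ 1) :=
  ⟨card_typeBGraph_adj hn, fun T => T.2.existsUnique_central hn,
    fun T _ _ hD => card_typeBGraph_adj_not_mem_le_one hn T hD⟩
end
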